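/- arXiv:2202.01129 — 8 statements merged into one kernel-verified Lean document; each statement's English description precedes it below -/
import Mathlib

section
/- Let Σ be a compact Hausdorff topological group with Haar probability measure μ_Σ acting measurably on a measurable space X. If γ is a bounded measurable function on X and P is a Σ-invariant probability measure on X, then S_Σ[γ] equals the conditional expectation E_P[γ | M_Σ], where M_Σ is the σ-algebra of Σ-invariant measurable sets, M_Σ = {measurable B ⊂ X : T_σ(B) = B for all σ ∈ Σ}. -/
open MeasureTheory

/-- `Mb X`: the set of bounded measurable real-valued functions on `X`. -/
def Mb (X : Type*) [MeasurableSpace X] : Set (X → ℝ) :=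
  {γ | Measurable γ ∧ ∃ C : ℝ, ∀ x, |γ x| ≤ C}

/-- The symmetrization operator `S_Σ[γ](x) = ∫_Σ γ(T_σ(x)) dμ_Σ(σ)`. -/
noncomputable def SSigma {X G : Type*} [MeasurableSpace X] [MeasurableSpace G]
    (μ : Measure G) (T : G → X → X) (γ : X → ℝ) : X → ℝ :=
  fun x => ∫ σ, γ (T σ x) ∂μ

/-- The `σ`-algebra `M_Σ` of `Σ`-invariant measurable sets,
`M_Σ = {measurable B ⊆ X : T_σ(B) = B for all σ ∈ Σ}`. -/
def MSigma {X G : Type*} [MeasurableSpace X] [Group G] (T : G → X → X)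
    (hT1 : T 1 = id) (hTmul : ∀ σ₁ σ₂ : G, T σ₁ ∘ T σ₂ = T (σ₁ * σ₂)) :
    MeasurableSpace X where
  MeasurableSet' B := MeasurableSet B ∧ ∀ σ : G, T σ '' B = B
  measurableSet_empty := ⟨MeasurableSet.empty, fun σ => by simp⟩
  measurableSet_compl := by
    rintro B ⟨hBmeas, hBinv⟩
    refine ⟨hBmeas.compl, fun σ => ?_⟩
    have hbij : Function.Bijective (T σ) := by
      have hlr : Function.LeftInverse (T σ⁻¹) (T σ) := by
        intro x
        have := congrFun (hTmul σ⁻¹ σ) x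
        simp only [Function.comp_apply, inv_mul_cancel, hT1, id_eq] at this
        exact this
      have hrl : Function.RightInverse (T σ⁻¹) (T σ) := by
        intro x
        have := congrFun (hTmul σ σ⁻¹) x
        simp only [Function.comp_apply, mul_inv_cancel, hT1, id_eq] at this
        exact this
      exact ⟨hlr.injective, hrl.surjective⟩
    rw [Set.image_compl_eq hbij, hBinv σ]
  measurableSet_iUnion := by
    intro s hs
    refine ⟨MeasurableSet.iUnion fun i => (hs i).1, fun σ => ?_⟩
    rw [Set.image_iUnion]
    exact Set.iUnion_congr fun i => (hs i).2 σ

/-- Lemma 3.1(c): if `γ` is bounded measurable and `P` is a `Σ`-invariant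
probability measure, then `S_Σ[γ] = E_P[γ | M_Σ]`, the conditional expectation of `γ`
with respect to the `σ`-algebra of `Σ`-invariant sets. -/
theorem symmetrization_eq_condexp
    {X : Type*} [MeasurableSpace X]
    {G : Type*} [Group G] [TopologicalSpace G] [IsTopologicalGroup G]
    [CompactSpace G] [T2Space G] [MeasurableSpace G] [BorelSpace G]
    (μ : Measure G) [IsProbabilityMeasure μ]
    (hμl : ∀ σ : G, Measure.map (fun τ => σ * τ) μ = μ)
    (hμr : ∀ σ : G, Measure.map (fun τ => τ * σ) μ = μ)
    (T : G → X → X)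
    (hT : Measurable fun p : G × X => T p.1 p.2)
    (hT1 : T 1 = id)
    (hTmul : ∀ σ₁ σ₂ : G, T σ₁ ∘ T σ₂ = T (σ₁ * σ₂))
    (γ : X → ℝ) (hγ : γ ∈ Mb X)
    (P : Measure X) [IsProbabilityMeasure P]
    (hPinv : ∀ σ : G, Measure.map (T σ) P = P) :
    SSigma μ T γ =ᵐ[P] MeasureTheory.condExp (MSigma T hT1 hTmul) P γ := by
  obtain ⟨hγm, C, hC⟩ := hγ
  -- measurability of each T σ
  have hTσ : ∀ σ : G, Measurable (T σ) := fun σ =>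
    hT.comp (measurable_const.prodMk measurable_id)
  have hinv : ∀ σ : G, Function.LeftInverse (T σ⁻¹) (T σ) ∧
      Function.RightInverse (T σ⁻¹) (T σ) := by
    intro σ
    constructor
    · intro x
      have := congrFun (hTmul σ⁻¹ σ) x
      simpa [hT1] using this
    · intro x
      have := congrFun (hTmul σ σ⁻¹) x
      simpa [hT1] using this
  have hm : MSigma T hT1 hTmul ≤ ‹MeasurableSpace X› := fun s hs => hs.1
  haveI : SigmaFinite (P.trim hm) := by infer_instance
  have hγint : Integrable γ P :=
    ⟨hγm.aestronglyMeasurable, HasFiniteIntegral.of_bounded (C := C)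
      (Filter.Eventually.of_forall fun x => by simpa using hC x)⟩
  -- strong measurability of SSigma
  have hSm : Measurable (SSigma μ T γ) := by
    have : StronglyMeasurable (Function.uncurry fun (x : X) (σ : G) => γ (T σ x)) := by
      apply Measurable.stronglyMeasurable
      exact hγm.comp (hT.comp measurable_swap)
    exact (this.integral_prod_right').measurable
  have hSbound : ∀ x, |SSigma μ T γ x| ≤ C := by
    intro x
    calc |∫ σ, γ (T σ x) ∂μ| ≤ ∫ σ, |γ (T σ x)| ∂μ := by
          simpa using norm_integral_le_integral_norm (fun σ => γ (T σ x)) (μ := μ)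
      _ ≤ ∫ _, C ∂μ := by
          apply integral_mono_of_nonneg (Filter.Eventually.of_forall fun _ => abs_nonneg _)
            (integrable_const C) (Filter.Eventually.of_forall fun σ => hC _)
      _ = C := by simp
  -- invariance of SSigma
  have hSinv : ∀ σ : G, (SSigma μ T γ) ∘ (T σ) = SSigma μ T γ := by
    intro σ
    funext x
    show ∫ τ, γ (T τ (T σ x)) ∂μ = ∫ τ, γ (T τ x) ∂μ
    have h1 : ∀ τ, γ (T τ (T σ x)) = γ (T (τ * σ) x) := fun τ => by
      rw [← congrFun (hTmul τ σ) x]; rfl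
    have key : ∫ τ, γ (T τ x) ∂μ = ∫ τ, γ (T (τ * σ) x) ∂μ := by
      conv_lhs => rw [← hμr σ]
      rw [integral_map (measurable_mul_const σ).aemeasurable
        (show Measurable fun τ : G => γ (T τ x) from
          hγm.comp (hT.comp (measurable_id.prodMk measurable_const))).aestronglyMeasurable]
    simp_rw [h1]
    rw [key]
  -- SSigma is MSigma-measurable
  have hSmeas' : @Measurable X ℝ (MSigma T hT1 hTmul) _ (SSigma μ T γ) := by
    intro A hA
    refine ⟨hSm hA, fun σ => ?_⟩
    have hbij : Function.Bijective (T σ) := ⟨(hinv σ).1.injective, (hinv σ).2.surjective⟩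
    rw [Set.image_eq_preimage_of_inverse (hinv σ).1 (hinv σ).2, ← Set.preimage_comp,
      hSinv σ⁻¹]
  have hSint : Integrable (SSigma μ T γ) P :=
    ⟨hSm.aestronglyMeasurable, HasFiniteIntegral.of_bounded (C := C)
      (Filter.Eventually.of_forall fun x => by simpa using hSbound x)⟩
  refine ae_eq_condExp_of_forall_setIntegral_eq hm hγint
    (fun s hs _ => hSint.integrableOn) (fun s hs _ => ?_)
    ⟨SSigma μ T γ, hSmeas'.stronglyMeasurable, Filter.EventuallyEq.rfl⟩
  -- the set-integral identity
  have hpre : ∀ σ : G, T σ ⁻¹' s = s := by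
    intro σ
    conv_lhs => rw [← hs.2 σ]
    exact Set.preimage_image_eq _ (hinv σ).1.injective
  have stepA : ∀ σ : G, ∫ x in s, γ (T σ x) ∂P = ∫ x in s, γ x ∂P := by
    intro σ
    conv_rhs => rw [← hPinv σ, Measure.restrict_map (hTσ σ) hs.1, hpre σ]
    rw [integral_map (hTσ σ).aemeasurable hγm.aestronglyMeasurable]
  have hint : Integrable (Function.uncurry fun (x : X) (σ : G) => γ (T σ x))
      ((P.restrict s).prod μ) :=
    ⟨(hγm.comp (hT.comp measurable_swap)).aestronglyMeasurable,
      HasFiniteIntegral.of_bounded (C := C)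
        (Filter.Eventually.of_forall fun p => by simpa [Function.uncurry] using hC (T p.2 p.1))⟩
  calc ∫ x in s, SSigma μ T γ x ∂P
      = ∫ σ, ∫ x in s, γ (T σ x) ∂P ∂μ := integral_integral_swap hint
    _ = ∫ σ, ∫ x in s, γ x ∂P ∂μ := by simp_rw [stepA]
    _ = ∫ x in s, γ x ∂P := by simp
end

section
/- Let Σ be a compact Hausdorff topological group with Haar probability measure μ_Σ acting measurably on a measurable space X, let f : [0,∞) → ℝ be convex and lower semicontinuous with f(1) = 0 and f strictly convex at 1, and let Γ ⊂ M_b(X) satisfy S_Σ[Γ] ⊂ Γ. If the probability measures Q and P on X are both Σ-invariant, then the (f,Γ)-divergence satisfies D_f^Γ(Q‖P) = D_f^{Γ_Σ^{inv}}(Q‖P), where Γ_Σ^{inv} = {γ ∈ Γ : γ ∘ T_σ = γ for all σ ∈ Σ}. -/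
open MeasureTheory
open scoped ENNReal

/-- The Legendre transform `f*(y) = sup_{x ≥ 0} {yx − f(x)}` of `f : [0,∞) → ℝ`,
valued in the extended reals. -/
noncomputable def legendre (f : ℝ → ℝ) (y : ℝ) : EReal :=
  ⨆ x ∈ Set.Ici (0 : ℝ), ((y * x - f x : ℝ) : EReal)

/-- Positive part of an extended real, as an extended nonnegative real. -/
noncomputable def erealToENNReal : EReal → ℝ≥0∞
  | ⊥ => 0
  | ⊤ => ⊤
  | (x : ℝ) => ENNReal.ofReal x

/-- Integral of an extended-real-valued function: difference of the lower integrals of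
the positive and negative parts. -/
noncomputable def eIntegral {X : Type*} [MeasurableSpace X] (P : Measure X)
    (g : X → EReal) : EReal :=
  ((∫⁻ x, erealToENNReal (g x) ∂P : ℝ≥0∞) : EReal)
    - ((∫⁻ x, erealToENNReal (-(g x)) ∂P : ℝ≥0∞) : EReal)

/-- `Λ_f^P[γ] = inf_{ν ∈ ℝ} {ν + E_P[f*(γ − ν)]}`. -/
noncomputable def LambdaF {X : Type*} [MeasurableSpace X] (f : ℝ → ℝ) (P : Measure X)
    (γ : X → ℝ) : EReal :=
  ⨅ ν : ℝ, ((ν : EReal) + eIntegral P fun x => legendre f (γ x - ν))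

/-- The `(f,Γ)`-divergence `D_f^Γ(Q‖P) = sup_{γ ∈ Γ} {E_Q[γ] − Λ_f^P[γ]}`. -/
noncomputable def DfGamma {X : Type*} [MeasurableSpace X] (f : ℝ → ℝ)
    (Γ : Set (X → ℝ)) (Q P : Measure X) : EReal :=
  ⨆ γ ∈ Γ, (((∫ x, γ x ∂Q : ℝ) : EReal) - LambdaF f P γ)

namespace Aux
open MeasureTheory
open scoped ENNReal NNReal

lemma toE_coe (r : ℝ) : erealToENNReal (r : EReal) = ENNReal.ofReal r := rfl

lemma toE_top : erealToENNReal ⊤ = ⊤ := rfl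
lemma toE_bot : erealToENNReal ⊥ = 0 := rfl

lemma toE_mono : Monotone erealToENNReal := by
  intro a b h
  induction a using EReal.rec with
  | bot => simp [toE_bot]
  | coe r =>
    induction b using EReal.rec with
    | bot => simp at h
    | coe s =>
      simpa [toE_coe] using ENNReal.ofReal_le_ofReal (EReal.coe_le_coe_iff.1 h)
    | top => simp [toE_top]
  | top =>
    rw [top_le_iff.1 h]

lemma toE_measurable : Measurable erealToENNReal := toE_mono.measurable

lemma toE_coe_ennreal (L : ℝ≥0∞) : erealToENNReal (L : EReal) = L := by
  by_cases hL : L = ⊤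
  · simp [hL, EReal.coe_ennreal_top, toE_top]
  · lift L to ℝ≥0 using hL with r
    rw [EReal.coe_nnreal_eq_coe_real, toE_coe, ENNReal.ofReal_coe_nnreal]

lemma coe_le_toE {r : ℝ} {z : EReal} (h : (r : EReal) ≤ z) :
    ENNReal.ofReal r ≤ erealToENNReal z := by
  rw [← toE_coe]; exact toE_mono h

end Aux
namespace Aux2
open MeasureTheory Aux
open scoped ENNReal NNReal

lemma coe_affine_le_legendre (f : ℝ → ℝ) (y x₀ : ℝ) (hx₀ : 0 ≤ x₀) :
    ((y * x₀ - f x₀ : ℝ) : EReal) ≤ legendre f y :=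
  le_iSup₂ (f := fun x (_ : x ∈ Set.Ici (0:ℝ)) => ((y * x - f x : ℝ) : EReal)) x₀ hx₀

lemma neg_f0_le_legendre (f : ℝ → ℝ) (y : ℝ) : ((-f 0 : ℝ) : EReal) ≤ legendre f y := by
  simpa using coe_affine_le_legendre f y 0 le_rfl

lemma legendre_mono (f : ℝ → ℝ) : Monotone (legendre f) := by
  intro y y' h
  refine iSup₂_le fun x hx => ?_
  refine le_trans ?_ (coe_affine_le_legendre f y' x hx)
  exact EReal.coe_le_coe_iff.2 (by nlinarith [Set.mem_Ici.1 hx])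

lemma legendre_measurable (f : ℝ → ℝ) : Measurable (legendre f) :=
  (legendre_mono f).measurable

lemma toE_sub_const {z : EReal} {c : ℝ} (hc : c ≤ 0) (hz : (c : EReal) ≤ z) :
    erealToENNReal (z - (c : EReal))
      = erealToENNReal z + (ENNReal.ofReal (-c) - erealToENNReal (-z)) := by
  induction z using EReal.rec with
  | bot => exact absurd hz (by simp)
  | top =>
    rw [EReal.top_sub_coe, toE_top]
    simp
  | coe r =>
    have hcr : c ≤ r := EReal.coe_le_coe_iff.1 hz
    rw [← EReal.coe_sub, ← EReal.coe_neg, toE_coe, toE_coe, toE_coe]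
    rcases le_or_gt 0 r with h0 | h0
    · rw [ENNReal.ofReal_eq_zero.2 (by linarith : -r ≤ 0), tsub_zero,
        ← ENNReal.ofReal_add h0 (by linarith : (0:ℝ) ≤ -c)]
      ring_nf
    · rw [ENNReal.ofReal_eq_zero.2 h0.le, zero_add,
        ← ENNReal.ofReal_sub _ (by linarith : (0:ℝ) ≤ -r)]
      ring_nf

lemma key_arith {a b k : ℝ≥0∞} {c : ℝ} (hc : c ≤ 0) (hk : k = ENNReal.ofReal (-c))
    (hb : b ≤ k) : ((a + (k - b) : ℝ≥0∞) : EReal) + (c : EReal) = (a : EReal) - (b : EReal) := by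
  have hkt : k ≠ ⊤ := by simp [hk]
  have hbt : b ≠ ⊤ := fun h => hkt (top_le_iff.1 (h ▸ hb))
  by_cases ha : a = ⊤
  · subst ha
    rw [top_add, EReal.coe_ennreal_top, EReal.top_add_coe]
    lift b to ℝ≥0 using hbt with r
    rw [EReal.coe_nnreal_eq_coe_real, EReal.top_sub_coe]
  · lift a to ℝ≥0 using ha with p
    lift b to ℝ≥0 using hbt with q
    lift k to ℝ≥0 using hkt with m
    have hqm : q ≤ m := by exact_mod_cast hb
    rw [← ENNReal.coe_sub, ← ENNReal.coe_add, EReal.coe_nnreal_eq_coe_real,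
      EReal.coe_nnreal_eq_coe_real, EReal.coe_nnreal_eq_coe_real, ← EReal.coe_add,
      ← EReal.coe_sub]
    norm_cast
    have hm : (m : ℝ) = -c := by
      have := congrArg ENNReal.toReal hk
      simpa [ENNReal.toReal_ofReal (by linarith : (0:ℝ) ≤ -c)] using this
    have : ((p + (m - q) : ℝ≥0) : ℝ) = (p:ℝ) + ((m:ℝ) - q) := by
      push_cast [NNReal.coe_sub hqm]; ring
    rw [this, hm]; ring

end Aux2
namespace Aux2b
open MeasureTheory Aux Aux2
open scoped ENNReal

lemma legendre_sub_const_measurable (f : ℝ → ℝ) (ν c : ℝ) :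
    Measurable fun y : ℝ => legendre f (y - ν) - (c : EReal) := by
  have hm : Monotone fun y : ℝ => legendre f (y - ν) - (c : EReal) := fun a b h =>
    EReal.sub_le_sub (legendre_mono f (by linarith)) le_rfl
  exact hm.measurable

end Aux2b
namespace Aux3
open MeasureTheory Aux Aux2
open scoped ENNReal NNReal

variable {X : Type*} [MeasurableSpace X]

lemma eIntegral_rep (P : Measure X) [IsProbabilityMeasure P]
    (g : X → EReal) (hmeas : Measurable g) {c : ℝ} (hc : c ≤ 0)
    (hg : ∀ x, (c : EReal) ≤ g x) :
    eIntegral P g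
      = ((∫⁻ x, erealToENNReal (g x - (c : EReal)) ∂P : ℝ≥0∞) : EReal) + (c : EReal) := by
  set k := ENNReal.ofReal (-c) with hk
  have hA : Measurable fun x => erealToENNReal (g x) := toE_measurable.comp hmeas
  have hnegg : Measurable fun x => -(g x) := measurable_neg.comp hmeas
  have hB : Measurable fun x => erealToENNReal (-(g x)) := toE_measurable.comp hnegg
  have hBk : ∀ x, erealToENNReal (-(g x)) ≤ k := by
    intro x
    have h1 : -(g x) ≤ ((-c : ℝ) : EReal) := by
      rw [EReal.coe_neg]
      exact EReal.neg_le_neg_iff.2 (hg x)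
    calc erealToENNReal (-(g x)) ≤ erealToENNReal ((-c : ℝ) : EReal) := toE_mono h1
      _ = k := toE_coe _
  have hptw : ∀ x, erealToENNReal (g x - (c : EReal))
      = erealToENNReal (g x) + (k - erealToENNReal (-(g x))) := fun x => toE_sub_const hc (hg x)
  have hintB : (∫⁻ x, erealToENNReal (-(g x)) ∂P) ≤ k := by
    calc (∫⁻ x, erealToENNReal (-(g x)) ∂P) ≤ ∫⁻ _, k ∂P := lintegral_mono hBk
      _ = k := by simp
  have hsplit : (∫⁻ x, erealToENNReal (g x - (c : EReal)) ∂P)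
      = (∫⁻ x, erealToENNReal (g x) ∂P) + (k - ∫⁻ x, erealToENNReal (-(g x)) ∂P) := by
    calc (∫⁻ x, erealToENNReal (g x - (c : EReal)) ∂P)
        = ∫⁻ x, (erealToENNReal (g x) + (k - erealToENNReal (-(g x)))) ∂P := by
          exact lintegral_congr hptw
      _ = (∫⁻ x, erealToENNReal (g x) ∂P) + ∫⁻ x, (k - erealToENNReal (-(g x))) ∂P :=
          lintegral_add_left hA _
      _ = (∫⁻ x, erealToENNReal (g x) ∂P) + (k - ∫⁻ x, erealToENNReal (-(g x)) ∂P) := by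
          congr 1
          rw [lintegral_sub hB (by exact lt_of_le_of_lt hintB (by simp [hk]) |>.ne)
            (Filter.Eventually.of_forall hBk)]
          simp
  rw [eIntegral, hsplit]
  exact (key_arith hc hk hintB).symm

lemma jensen_step {G : Type*} [MeasurableSpace G] (μ : Measure G) [IsProbabilityMeasure μ]
    (f : ℝ → ℝ) (h : G → ℝ) (hh : Measurable h) (C : ℝ) (hC : ∀ σ, |h σ| ≤ C)
    (ν : ℝ) {c : ℝ} (hc : c ≤ 0) (hcf : c ≤ -f 0) :
    legendre f ((∫ σ, h σ ∂μ) - ν)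
      ≤ ((∫⁻ σ, erealToENNReal (legendre f (h σ - ν) - (c : EReal)) ∂μ : ℝ≥0∞) : EReal)
        + (c : EReal) := by
  have hhint : Integrable h μ :=
    (integrable_const C).mono' hh.aestronglyMeasurable
      (Filter.Eventually.of_forall fun σ => by simpa using hC σ)
  rw [legendre]
  refine iSup₂_le fun x₀ hx₀ => ?_
  have hx₀' : (0:ℝ) ≤ x₀ := hx₀
  set u : G → ℝ := fun σ => (h σ - ν) * x₀ - f x₀ with hu
  have hu_int : Integrable u μ := by
    have : Integrable (fun σ => h σ * x₀ - (ν * x₀ + f x₀)) μ :=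
      (hhint.mul_const x₀).sub (integrable_const _)
    refine this.congr (Filter.Eventually.of_forall fun σ => by simp [hu]; ring)
  have hu_integral : ∫ σ, u σ ∂μ = ((∫ σ, h σ ∂μ) - ν) * x₀ - f x₀ := by
    have e1 : u = fun σ => h σ * x₀ - (ν * x₀ + f x₀) := by funext σ; simp [hu]; ring
    rw [e1, integral_sub (hhint.mul_const x₀) (integrable_const _),
      integral_mul_const, integral_const]
    simp [measure_univ]
    ring
  set u' : G → ℝ := fun σ => max (u σ) c with hu'
  have hu'_int : Integrable u' μ := hu_int.sup (integrable_const c)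
  have h1 : ∫ σ, u σ ∂μ ≤ ∫ σ, u' σ ∂μ :=
    integral_mono hu_int hu'_int fun σ => le_max_left _ _
  have h2 : ∫ σ, u' σ ∂μ = (∫ σ, (u' σ - c) ∂μ) + c := by
    rw [integral_sub hu'_int (integrable_const c), integral_const]
    simp [measure_univ]
  have hnn : (0:ℝ) ≤ ∫ σ, (u' σ - c) ∂μ :=
    integral_nonneg fun σ => sub_nonneg.2 (le_max_right _ _)
  have h3 : ENNReal.ofReal (∫ σ, (u' σ - c) ∂μ) = ∫⁻ σ, ENNReal.ofReal (u' σ - c) ∂μ :=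
    ofReal_integral_eq_lintegral_ofReal (hu'_int.sub (integrable_const c))
      (Filter.Eventually.of_forall fun σ => sub_nonneg.2 (le_max_right _ _))
  have h4 : ∀ σ, ENNReal.ofReal (u' σ - c)
      ≤ erealToENNReal (legendre f (h σ - ν) - (c : EReal)) := by
    intro σ
    apply coe_le_toE
    have hle : ((u' σ : ℝ) : EReal) ≤ legendre f (h σ - ν) := by
      have he : u' σ = max (u σ) c := rfl
      rcases max_choice (u σ) c with h' | h' <;> rw [he, h']
      · exact coe_affine_le_legendre f (h σ - ν) x₀ hx₀'
      · exact le_trans (EReal.coe_le_coe_iff.2 hcf) (neg_f0_le_legendre f (h σ - ν))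
    rw [EReal.coe_sub]
    exact EReal.sub_le_sub hle le_rfl
  have h5 : (∫⁻ σ, ENNReal.ofReal (u' σ - c) ∂μ)
      ≤ ∫⁻ σ, erealToENNReal (legendre f (h σ - ν) - (c : EReal)) ∂μ :=
    lintegral_mono h4
  calc (((∫ σ, h σ ∂μ - ν) * x₀ - f x₀ : ℝ) : EReal)
      = ((∫ σ, u σ ∂μ : ℝ) : EReal) := by rw [hu_integral]
    _ ≤ ((∫ σ, u' σ ∂μ : ℝ) : EReal) := EReal.coe_le_coe_iff.2 h1
    _ = ((∫ σ, (u' σ - c) ∂μ : ℝ) : EReal) + (c : EReal) := by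
        rw [h2, EReal.coe_add]
    _ = ((ENNReal.ofReal (∫ σ, (u' σ - c) ∂μ) : ℝ≥0∞) : EReal) + (c : EReal) := by
        rw [EReal.coe_ennreal_ofReal, max_eq_left hnn]
    _ = ((∫⁻ σ, ENNReal.ofReal (u' σ - c) ∂μ : ℝ≥0∞) : EReal) + (c : EReal) := by rw [h3]
    _ ≤ ((∫⁻ σ, erealToENNReal (legendre f (h σ - ν) - (c : EReal)) ∂μ : ℝ≥0∞) : EReal)
        + (c : EReal) := by
        exact add_le_add_left (EReal.coe_ennreal_le_coe_ennreal_iff.2 h5) _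

end Aux3
namespace Aux4
open MeasureTheory Aux Aux2 Aux3
open scoped ENNReal NNReal

variable {X G : Type*} [MeasurableSpace X] [MeasurableSpace G]

lemma lintegral_symmetrize (μ : Measure G) [IsProbabilityMeasure μ]
    (P : Measure X) [IsProbabilityMeasure P] (T : G → X → X)
    (hT : Measurable fun p : G × X => T p.1 p.2)
    (hPinv : ∀ σ : G, Measure.map (T σ) P = P)
    (H : X → ℝ≥0∞) (hH : Measurable H) :
    ∫⁻ x, (∫⁻ σ, H (T σ x) ∂μ) ∂P = ∫⁻ x, H x ∂P := by
  have hTσ : ∀ σ, Measurable (T σ) := fun σ => hT.comp measurable_prodMk_left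
  have hmeas : AEMeasurable (Function.uncurry fun x σ => H (T σ x)) (P.prod μ) := by
    have : (Function.uncurry fun (x : X) (σ : G) => H (T σ x))
        = (fun p : G × X => H (T p.1 p.2)) ∘ Prod.swap := rfl
    rw [this]
    exact ((hH.comp hT).comp measurable_swap).aemeasurable
  rw [lintegral_lintegral_swap hmeas]
  have hin : ∀ σ, ∫⁻ x, H (T σ x) ∂P = ∫⁻ x, H x ∂P := by
    intro σ
    rw [← lintegral_map hH (hTσ σ), hPinv σ]
  simp only [hin]
  simp

lemma symmetrize_measurable (μ : Measure G) [SFinite μ] (T : G → X → X)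
    (hT : Measurable fun p : G × X => T p.1 p.2) {γ : X → ℝ} (hγ : Measurable γ) :
    Measurable (SSigma μ T γ) := by
  have : StronglyMeasurable fun p : X × G => γ (T p.2 p.1) :=
    ((hγ.comp (hT.comp measurable_swap))).stronglyMeasurable
  exact this.integral_prod_right'.measurable

lemma symmetrize_invariant [Group G] (μ : Measure G) [IsProbabilityMeasure μ]
    (hμr : ∀ σ : G, Measure.map (fun τ => τ * σ) μ = μ)
    (hmul : ∀ σ : G, Measurable fun τ : G => τ * σ)
    (T : G → X → X) (hT : Measurable fun p : G × X => T p.1 p.2)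
    (hTmul : ∀ σ₁ σ₂ : G, T σ₁ ∘ T σ₂ = T (σ₁ * σ₂))
    {γ : X → ℝ} (hγ : Measurable γ) (τ : G) :
    SSigma μ T γ ∘ T τ = SSigma μ T γ := by
  funext x
  have hTσ : ∀ σ, Measurable (T σ) := fun σ => hT.comp measurable_prodMk_left
  have hsx : Measurable fun s : G => γ (T s x) :=
    hγ.comp (hT.comp measurable_prodMk_right)
  have e1 : ∀ σ : G, γ (T σ (T τ x)) = γ (T (σ * τ) x) := by
    intro σ
    have := congrFun (hTmul σ τ) x
    simp only [Function.comp_apply] at this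
    rw [this]
  calc SSigma μ T γ (T τ x) = ∫ σ, γ (T (σ * τ) x) ∂μ := by
        simp only [SSigma, e1]
    _ = ∫ s, γ (T s x) ∂(Measure.map (fun σ => σ * τ) μ) := by
        rw [integral_map (hmul τ).aemeasurable]
        rw [hμr τ]
        exact hsx.aestronglyMeasurable
    _ = SSigma μ T γ x := by rw [hμr τ]; rfl

lemma symmetrize_integral (μ : Measure G) [IsProbabilityMeasure μ]
    (Q : Measure X) [IsProbabilityMeasure Q] (T : G → X → X)
    (hT : Measurable fun p : G × X => T p.1 p.2)
    (hQinv : ∀ σ : G, Measure.map (T σ) Q = Q)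
    {γ : X → ℝ} (hγ : Measurable γ) {C : ℝ} (hC : ∀ x, |γ x| ≤ C) :
    ∫ x, SSigma μ T γ x ∂Q = ∫ x, γ x ∂Q := by
  have hTσ : ∀ σ, Measurable (T σ) := fun σ => hT.comp measurable_prodMk_left
  have hint : Integrable (Function.uncurry fun (x : X) (σ : G) => γ (T σ x)) (Q.prod μ) := by
    have hm : Measurable (Function.uncurry fun (x : X) (σ : G) => γ (T σ x)) := by
      have : (Function.uncurry fun (x : X) (σ : G) => γ (T σ x))
          = (fun p : G × X => γ (T p.1 p.2)) ∘ Prod.swap := rfl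
      rw [this]
      exact (hγ.comp hT).comp measurable_swap
    refine (integrable_const C).mono' hm.aestronglyMeasurable ?_
    exact Filter.Eventually.of_forall fun p => by simpa [Function.uncurry_def] using hC _
  calc ∫ x, SSigma μ T γ x ∂Q
      = ∫ x, ∫ σ, γ (T σ x) ∂μ ∂Q := rfl
    _ = ∫ σ, ∫ x, γ (T σ x) ∂Q ∂μ := integral_integral_swap hint
    _ = ∫ σ, (∫ x, γ x ∂Q) ∂μ := by
        refine integral_congr_ae (Filter.Eventually.of_forall fun σ => ?_)
        show ∫ x, γ (T σ x) ∂Q = ∫ x, γ x ∂Q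
        rw [← integral_map (hTσ σ).aemeasurable (by rw [hQinv σ]; exact hγ.aestronglyMeasurable),
          hQinv σ]
    _ = ∫ x, γ x ∂Q := by simp [measure_univ]

end Aux4
/-- Theorem 3.1 for `(f,Γ)`-divergences: if `S_Σ[Γ] ⊆ Γ` and the
probability measures `Q, P` are `Σ`-invariant, then
`D_f^Γ(Q‖P) = D_f^{Γ_Σ^{inv}}(Q‖P)`. -/
theorem fGamma_divergence_invariant_discriminator
    {X : Type*} [MeasurableSpace X]
    {G : Type*} [Group G] [TopologicalSpace G] [IsTopologicalGroup G]
    [CompactSpace G] [T2Space G] [MeasurableSpace G] [BorelSpace G]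
    (μ : Measure G) [IsProbabilityMeasure μ]
    (hμl : ∀ σ : G, Measure.map (fun τ => σ * τ) μ = μ)
    (hμr : ∀ σ : G, Measure.map (fun τ => τ * σ) μ = μ)
    (T : G → X → X)
    (hT : Measurable fun p : G × X => T p.1 p.2)
    (hT1 : T 1 = id)
    (hTmul : ∀ σ₁ σ₂ : G, T σ₁ ∘ T σ₂ = T (σ₁ * σ₂))
    -- `f : [0,∞) → ℝ` convex, lower semicontinuous, `f(1) = 0`, strictly convex at `1`
    (f : ℝ → ℝ)
    (hfconv : ConvexOn ℝ (Set.Ici (0 : ℝ)) f)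
    (hflsc : LowerSemicontinuousOn f (Set.Ici (0 : ℝ)))
    (hf1 : f 1 = 0)
    (hfstrict : ∀ x ∈ Set.Ici (0 : ℝ), ∀ y ∈ Set.Ici (0 : ℝ), ∀ t : ℝ,
      0 < t → t < 1 → x ≠ y → t * x + (1 - t) * y = 1 →
      f 1 < t * f x + (1 - t) * f y)
    (Γ : Set (X → ℝ)) (hΓb : Γ ⊆ Mb X)
    (hSΓ : SSigma μ T '' Γ ⊆ Γ)
    (Q P : Measure X) [IsProbabilityMeasure Q] [IsProbabilityMeasure P]
    (hQinv : ∀ σ : G, Measure.map (T σ) Q = Q)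
    (hPinv : ∀ σ : G, Measure.map (T σ) P = P) :
    DfGamma f Γ Q P = DfGamma f {γ ∈ Γ | ∀ σ : G, γ ∘ T σ = γ} Q P := by
    classical
  have hTσ : ∀ σ : G, Measurable (T σ) := fun σ => hT.comp measurable_prodMk_left
  set c : ℝ := min (-f 0) 0 with hc_def
  have hc : c ≤ 0 := min_le_right _ _
  have hcf : c ≤ -f 0 := min_le_left _ _
  apply le_antisymm
  · rw [DfGamma, DfGamma]
    refine iSup₂_le fun γ hγ => ?_
    obtain ⟨hγm, C, hγC⟩ := hΓb hγ
    set γb := SSigma μ T γ with hγb_def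
    have hγbΓ : γb ∈ Γ := hSΓ ⟨γ, hγ, rfl⟩
    have hγb_meas : Measurable γb := Aux4.symmetrize_measurable μ T hT hγm
    have hinv : ∀ τ : G, γb ∘ T τ = γb := fun τ =>
      Aux4.symmetrize_invariant μ hμr (fun σ => measurable_mul_const σ) T hT hTmul hγm τ
    have hEQ : ∫ x, γb x ∂Q = ∫ x, γ x ∂Q :=
      Aux4.symmetrize_integral μ Q T hT hQinv hγm hγC
    have hleg_lb : ∀ y : ℝ, (c : EReal) ≤ legendre f y := fun y =>
      le_trans (EReal.coe_le_coe_iff.2 hcf) (Aux2.neg_f0_le_legendre f y)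
    have hΛ : LambdaF f P γb ≤ LambdaF f P γ := by
      rw [LambdaF, LambdaF]
      refine iInf_mono fun ν => ?_
      refine add_le_add_right ?_ _
      have hg_meas : Measurable fun x => legendre f (γ x - ν) :=
        (Aux2.legendre_measurable f).comp (hγm.sub measurable_const)
      have hgb_meas : Measurable fun x => legendre f (γb x - ν) :=
        (Aux2.legendre_measurable f).comp (hγb_meas.sub measurable_const)
      rw [Aux3.eIntegral_rep P _ hg_meas hc (fun x => hleg_lb _),
        Aux3.eIntegral_rep P _ hgb_meas hc (fun x => hleg_lb _)]
      refine add_le_add_left (EReal.coe_ennreal_le_coe_ennreal_iff.2 ?_) _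
      set H : X → ℝ≥0∞ := fun x => erealToENNReal (legendre f (γ x - ν) - (c : EReal))
        with hH_def
      have hH : Measurable H :=
        Aux.toE_measurable.comp ((Aux2b.legendre_sub_const_measurable f ν c).comp hγm)
      have hpt : ∀ x, erealToENNReal (legendre f (γb x - ν) - (c : EReal))
          ≤ ∫⁻ σ, H (T σ x) ∂μ := by
        intro x
        have hhx : Measurable fun σ : G => γ (T σ x) :=
          hγm.comp (hT.comp measurable_prodMk_right)
        have hJ := Aux3.jensen_step μ f (fun σ => γ (T σ x)) hhx C (fun σ => hγC _) ν hc hcf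
        set L : ℝ≥0∞ :=
          ∫⁻ σ, erealToENNReal (legendre f (γ (T σ x) - ν) - (c : EReal)) ∂μ with hL
        have h2 : legendre f (γb x - ν) - (c : EReal) ≤ ((L : EReal) + (c : EReal)) - (c : EReal) :=
          EReal.sub_le_sub hJ le_rfl
        rw [EReal.add_sub_cancel_right] at h2
        calc erealToENNReal (legendre f (γb x - ν) - (c : EReal))
            ≤ erealToENNReal ((L : EReal)) := Aux.toE_mono h2
          _ = L := Aux.toE_coe_ennreal L
          _ = ∫⁻ σ, H (T σ x) ∂μ := rfl
      calc ∫⁻ x, erealToENNReal (legendre f (γb x - ν) - (c : EReal)) ∂P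
          ≤ ∫⁻ x, (∫⁻ σ, H (T σ x) ∂μ) ∂P := lintegral_mono hpt
        _ = ∫⁻ x, H x ∂P := Aux4.lintegral_symmetrize μ P T hT hPinv H hH
    calc ((∫ x, γ x ∂Q : ℝ) : EReal) - LambdaF f P γ
        ≤ ((∫ x, γb x ∂Q : ℝ) : EReal) - LambdaF f P γb := by
          rw [hEQ]; exact EReal.sub_le_sub le_rfl hΛ
      _ ≤ ⨆ γ' ∈ {γ' ∈ Γ | ∀ σ : G, γ' ∘ T σ = γ'},
            (((∫ x, γ' x ∂Q : ℝ) : EReal) - LambdaF f P γ') :=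
          le_iSup₂ (f := fun γ' (_ : γ' ∈ {γ' ∈ Γ | ∀ σ : G, γ' ∘ T σ = γ'}) =>
            (((∫ x, γ' x ∂Q : ℝ) : EReal) - LambdaF f P γ')) γb ⟨hγbΓ, hinv⟩
  · rw [DfGamma, DfGamma]
    exact iSup₂_le fun γ hγ => le_iSup₂_of_le γ hγ.1 le_rfl
end

section
/- Let Σ be a compact Hausdorff topological group with Haar probability measure μ_Σ acting measurably on a measurable space X, and let Γ ⊂ M_b(X) satisfy S_Σ[Γ] ⊂ Γ. If the probability measures Q and P on X are both Σ-invariant, then the Γ-integral probability metric satisfies W^Γ(Q,P) = W^{Γ_Σ^{inv}}(Q,P), where Γ_Σ^{inv} = {γ ∈ Γ : γ ∘ T_σ = γ for all σ ∈ Σ}. -/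
open MeasureTheory

/-- The `Γ`-integral probability metric `W^Γ(Q,P) = sup_{γ ∈ Γ} {E_Q[γ] − E_P[γ]}`. -/
noncomputable def IPM {X : Type*} [MeasurableSpace X] (Γ : Set (X → ℝ))
    (Q P : Measure X) : EReal :=
  ⨆ γ ∈ Γ, (((∫ x, γ x ∂Q) - (∫ x, γ x ∂P) : ℝ) : EReal)

/-- Theorem 3.1 for `Γ`-IPMs: if `S_Σ[Γ] ⊆ Γ` and the probability
measures `Q, P` are `Σ`-invariant, then `W^Γ(Q,P) = W^{Γ_Σ^{inv}}(Q,P)`. -/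
theorem IPM_invariant_discriminator
    {X : Type*} [MeasurableSpace X]
    {G : Type*} [Group G] [TopologicalSpace G] [IsTopologicalGroup G]
    [CompactSpace G] [T2Space G] [MeasurableSpace G] [BorelSpace G]
    (μ : Measure G) [IsProbabilityMeasure μ]
    (hμl : ∀ σ : G, Measure.map (fun τ => σ * τ) μ = μ)
    (hμr : ∀ σ : G, Measure.map (fun τ => τ * σ) μ = μ)
    (T : G → X → X)
    (hT : Measurable fun p : G × X => T p.1 p.2)
    (hT1 : T 1 = id)
    (hTmul : ∀ σ₁ σ₂ : G, T σ₁ ∘ T σ₂ = T (σ₁ * σ₂))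
    (Γ : Set (X → ℝ)) (hΓb : Γ ⊆ Mb X)
    (hSΓ : SSigma μ T '' Γ ⊆ Γ)
    (Q P : Measure X) [IsProbabilityMeasure Q] [IsProbabilityMeasure P]
    (hQinv : ∀ σ : G, Measure.map (T σ) Q = Q)
    (hPinv : ∀ σ : G, Measure.map (T σ) P = P) :
    IPM Γ Q P = IPM {γ ∈ Γ | ∀ σ : G, γ ∘ T σ = γ} Q P := by

  have hTσ : ∀ σ : G, Measurable (T σ) := fun σ => hT.comp measurable_prodMk_left
  apply le_antisymm
  · refine iSup₂_le fun γ hγ => ?_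
    have hγm := (hΓb hγ).1
    obtain ⟨C, hC⟩ := (hΓb hγ).2
    set g := SSigma μ T γ with hgdef
    have hgΓ : g ∈ Γ := hSΓ ⟨γ, hγ, rfl⟩
    have hginv : ∀ σ : G, g ∘ T σ = g := by
      intro τ
      funext x
      show ∫ σ, γ (T σ (T τ x)) ∂μ = ∫ σ, γ (T σ x) ∂μ
      have h1 : ∀ σ : G, γ (T σ (T τ x)) = γ (T (σ * τ) x) := fun σ => by
        rw [← hTmul]; rfl
      simp_rw [h1]
      have hm : Measurable fun σ : G => γ (T σ x) :=
        hγm.comp (hT.comp measurable_prodMk_right)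
      calc ∫ σ, γ (T (σ * τ) x) ∂μ
          = ∫ σ, γ (T σ x) ∂(Measure.map (fun τ' => τ' * τ) μ) := by
            rw [integral_map (measurable_mul_const τ).aemeasurable hm.aestronglyMeasurable]
        _ = ∫ σ, γ (T σ x) ∂μ := by rw [hμr]
    have key : ∀ (ν : Measure X), IsProbabilityMeasure ν →
        (∀ σ : G, Measure.map (T σ) ν = ν) → ∫ x, g x ∂ν = ∫ x, γ x ∂ν := by
      intro ν hνp hν
      have hint : Integrable (Function.uncurry fun (x : X) (σ : G) => γ (T σ x))
          (ν.prod μ) := by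
        have hm : Measurable (Function.uncurry fun (x : X) (σ : G) => γ (T σ x)) :=
          hγm.comp (hT.comp (measurable_snd.prodMk measurable_fst))
        refine ⟨hm.aestronglyMeasurable, ?_⟩
        apply HasFiniteIntegral.of_bounded (C := C)
        filter_upwards with p
        simpa [Real.norm_eq_abs, Function.uncurry] using hC (T p.2 p.1)
      calc ∫ x, g x ∂ν = ∫ x, ∫ σ, γ (T σ x) ∂μ ∂ν := rfl
        _ = ∫ σ, ∫ x, γ (T σ x) ∂ν ∂μ := integral_integral_swap hint
        _ = ∫ σ, ∫ x, γ x ∂ν ∂μ := by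
            refine integral_congr_ae (Filter.Eventually.of_forall fun σ => ?_)
            calc ∫ x, γ (T σ x) ∂ν = ∫ x, γ x ∂(Measure.map (T σ) ν) :=
                  (integral_map (hTσ σ).aemeasurable hγm.aestronglyMeasurable).symm
              _ = ∫ x, γ x ∂ν := by rw [hν]
        _ = ∫ x, γ x ∂ν := by simp
    have hd : ((∫ x, γ x ∂Q) - (∫ x, γ x ∂P) : ℝ)
        = ((∫ x, g x ∂Q) - (∫ x, g x ∂P) : ℝ) := by
      rw [key Q inferInstance hQinv, key P inferInstance hPinv]
    rw [hd]
    exact le_iSup₂ (f := fun γ _ =>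
      (((∫ x, γ x ∂Q) - (∫ x, γ x ∂P) : ℝ) : EReal)) g (show g ∈ {γ ∈ Γ | ∀ σ : G, γ ∘ T σ = γ} from ⟨hgΓ, hginv⟩)
  · exact iSup₂_le fun γ hγ => le_iSup₂ (f := fun γ _ =>
      (((∫ x, γ x ∂Q) - (∫ x, γ x ∂P) : ℝ) : EReal)) γ hγ.1
end

section
/- Let Σ be a compact Hausdorff topological group with Haar probability measure μ_Σ acting measurably on a measurable space X, let ε > 0, and let c : X × X → ℝ⁺ be a measurable cost function that is Σ-invariant, i.e. c(T_σ(x), T_σ(y)) = c(x,y) for all σ ∈ Σ and x,y ∈ X. Let Γ ⊂ M_b(X)² be such that S_Σ[Γ] ⊂ Γ, where S_Σ acts componentwise. If Q and P are Σ-invariant probability measures on X, then the entropic regularized optimal transport functional satisfies W_{c,ε}^Γ(Q,P) = W_{c,ε}^{Γ_Σ^{inv}}(Q,P), and consequently the Sinkhorn divergence satisfies SD_{c,ε}^Γ(Q,P) = SD_{c,ε}^{Γ_Σ^{inv}}(Q,P). -/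
open MeasureTheory

/-- The entropic regularized optimal transport functional
`W_{c,ε}^Γ(Q,P) = sup_{(γ₁,γ₂) ∈ Γ} {E_P[γ₁] + E_Q[γ₂] − ε E_{P×Q}[exp((γ₁⊕γ₂−c)/ε)] + ε}`. -/
noncomputable def Wce {X : Type*} [MeasurableSpace X] (c : X × X → ℝ) (ε : ℝ)
    (Γ : Set ((X → ℝ) × (X → ℝ))) (Q P : Measure X) : EReal :=
  ⨆ γ ∈ Γ, (((∫ x, γ.1 x ∂P) + (∫ x, γ.2 x ∂Q)
      - ε * (∫ p, Real.exp ((γ.1 p.1 + γ.2 p.2 - c p) / ε) ∂(P.prod Q)) + ε : ℝ) : EReal)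

/-- The Sinkhorn divergence
`SD_{c,ε}^Γ(Q,P) = W_{c,ε}^Γ(Q,P) − (W_{c,ε}^Γ(Q,Q) + W_{c,ε}^Γ(P,P))/2`. -/
noncomputable def Sinkhorn {X : Type*} [MeasurableSpace X] (c : X × X → ℝ) (ε : ℝ)
    (Γ : Set ((X → ℝ) × (X → ℝ))) (Q P : Measure X) : EReal :=
  Wce c ε Γ Q P - (((2 : ℝ)⁻¹ : ℝ) : EReal) * (Wce c ε Γ Q Q + Wce c ε Γ P P)


section Helpers

open MeasureTheory

variable {X G : Type*} [MeasurableSpace X] [MeasurableSpace G] [Group G]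

private lemma int_of_bound {α : Type*} [MeasurableSpace α] {ν : Measure α} [IsFiniteMeasure ν]
    {f : α → ℝ} (hf : Measurable f) (C : ℝ) (hC : ∀ x, |f x| ≤ C) : Integrable f ν :=
  (integrable_const C).mono' hf.aestronglyMeasurable
    (Filter.Eventually.of_forall fun x => by simpa [Real.norm_eq_abs] using hC x)

private lemma ssigma_measurable (μ : Measure G) [IsProbabilityMeasure μ]
    (T : G → X → X) (hT : Measurable fun p : G × X => T p.1 p.2)
    {γ : X → ℝ} (hγ : Measurable γ) : Measurable (SSigma μ T γ) := by
  have h : StronglyMeasurable fun q : X × G => γ (T q.2 q.1) :=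
    ((hγ.comp hT).comp measurable_swap).stronglyMeasurable
  exact h.integral_prod_right'.measurable

private lemma ssigma_bound (μ : Measure G) [IsProbabilityMeasure μ] (T : G → X → X)
    {γ : X → ℝ} {C : ℝ} (hC : ∀ x, |γ x| ≤ C) (x : X) : |SSigma μ T γ x| ≤ C := by
  have h := norm_integral_le_of_norm_le_const (μ := μ) (f := fun σ => γ (T σ x)) (C := C)
    (Filter.Eventually.of_forall fun σ => by simpa [Real.norm_eq_abs] using hC _)
  simpa [SSigma, Real.norm_eq_abs, measure_univ] using h

private lemma ssigma_inv (μ : Measure G) [IsProbabilityMeasure μ]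
    (hμr : ∀ σ : G, Measure.map (fun τ => τ * σ) μ = μ)
    (hmulc : ∀ τ : G, Measurable fun σ : G => σ * τ)
    (T : G → X → X) (hT : Measurable fun p : G × X => T p.1 p.2)
    (hTmul : ∀ σ₁ σ₂ : G, T σ₁ ∘ T σ₂ = T (σ₁ * σ₂))
    {γ : X → ℝ} (hγ : Measurable γ) (τ : G) :
    SSigma μ T γ ∘ T τ = SSigma μ T γ := by
  funext x
  have hm : Measurable fun σ => γ (T σ x) := hγ.comp (hT.comp measurable_prodMk_right)
  calc SSigma μ T γ (T τ x) = ∫ σ, γ (T (σ * τ) x) ∂μ := by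
        simp only [SSigma]
        congr 1
        funext σ
        exact congrArg γ (congrFun (hTmul σ τ) x)
    _ = ∫ σ, γ (T σ x) ∂(Measure.map (fun σ => σ * τ) μ) :=
        (integral_map_of_stronglyMeasurable (hmulc τ) hm.stronglyMeasurable).symm
    _ = SSigma μ T γ x := by rw [hμr τ]; rfl

private lemma ssigma_integral (μ : Measure G) [IsProbabilityMeasure μ]
    (T : G → X → X) (hT : Measurable fun p : G × X => T p.1 p.2)
    {ν : Measure X} [IsProbabilityMeasure ν]
    (hνinv : ∀ σ : G, Measure.map (T σ) ν = ν)
    {γ : X → ℝ} (hγ : Measurable γ) {C : ℝ} (hC : ∀ x, |γ x| ≤ C) :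
    ∫ x, SSigma μ T γ x ∂ν = ∫ x, γ x ∂ν := by
  have h1 : Integrable (Function.uncurry fun (x : X) (σ : G) => γ (T σ x)) (ν.prod μ) :=
    int_of_bound ((hγ.comp hT).comp measurable_swap) C (fun q => hC _)
  calc ∫ x, SSigma μ T γ x ∂ν = ∫ x, ∫ σ, γ (T σ x) ∂μ ∂ν := rfl
    _ = ∫ σ, ∫ x, γ (T σ x) ∂ν ∂μ := integral_integral_swap h1
    _ = ∫ σ, ∫ x, γ x ∂ν ∂μ := by
        congr 1
        funext σ
        have hTσ : Measurable (T σ) := hT.comp measurable_prodMk_left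
        rw [← integral_map_of_stronglyMeasurable hTσ hγ.stronglyMeasurable, hνinv σ]
    _ = ∫ x, γ x ∂ν := by simp

private lemma ssigma_exp_le (μ : Measure G) [IsProbabilityMeasure μ]
    (T : G → X → X) (hT : Measurable fun p : G × X => T p.1 p.2)
    (ε : ℝ) (hε : 0 < ε)
    (c : X × X → ℝ) (hc_meas : Measurable c) (hc_nonneg : ∀ p, 0 ≤ c p)
    (hc_inv : ∀ σ : G, ∀ x y : X, c (T σ x, T σ y) = c (x, y))
    (Q P : Measure X) [IsProbabilityMeasure Q] [IsProbabilityMeasure P]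
    (hQinv : ∀ σ : G, Measure.map (T σ) Q = Q)
    (hPinv : ∀ σ : G, Measure.map (T σ) P = P)
    {γ₁ γ₂ : X → ℝ} (h1 : Measurable γ₁) (h2 : Measurable γ₂)
    {C₁ C₂ : ℝ} (hC1 : ∀ x, |γ₁ x| ≤ C₁) (hC2 : ∀ x, |γ₂ x| ≤ C₂) :
    ∫ p, Real.exp ((SSigma μ T γ₁ p.1 + SSigma μ T γ₂ p.2 - c p) / ε) ∂(P.prod Q)
      ≤ ∫ p, Real.exp ((γ₁ p.1 + γ₂ p.2 - c p) / ε) ∂(P.prod Q) := by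
  have hTσ : ∀ σ : G, Measurable (T σ) := fun σ => hT.comp measurable_prodMk_left
  set B : ℝ := Real.exp ((C₁ + C₂) / ε) with hB
  -- the function on (X × X) × G
  set g : (X × X) × G → ℝ :=
    fun q => Real.exp ((γ₁ (T q.2 q.1.1) + γ₂ (T q.2 q.1.2) - c q.1) / ε) with hg
  have hg_meas : Measurable g := by
    apply Measurable.exp
    exact (((h1.comp (hT.comp (measurable_snd.prodMk measurable_fst.fst))).add
      (h2.comp (hT.comp (measurable_snd.prodMk measurable_fst.snd)))).sub
      (hc_meas.comp measurable_fst)).div_const ε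
  have hg_bound : ∀ q, |g q| ≤ B := by
    intro q
    rw [hg, abs_of_pos (Real.exp_pos _)]
    apply Real.exp_le_exp.mpr
    refine div_le_div_of_nonneg_right ?_ hε.le
    · have := (abs_le.1 (hC1 (T q.2 q.1.1))).2
      have := (abs_le.1 (hC2 (T q.2 q.1.2))).2
      have := hc_nonneg q.1
      linarith
  -- Jensen pointwise
  have jensen : ∀ p : X × X,
      Real.exp ((SSigma μ T γ₁ p.1 + SSigma μ T γ₂ p.2 - c p) / ε)
        ≤ ∫ σ, Real.exp ((γ₁ (T σ p.1) + γ₂ (T σ p.2) - c p) / ε) ∂μ := by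
    intro p
    set f : G → ℝ := fun σ => (γ₁ (T σ p.1) + γ₂ (T σ p.2) - c p) / ε with hf
    have hfm : Measurable f :=
      (((h1.comp (hT.comp measurable_prodMk_right)).add
        (h2.comp (hT.comp measurable_prodMk_right))).sub measurable_const).div_const ε
    have hfb : ∀ σ, |f σ| ≤ (C₁ + C₂ + |c p|) / ε := fun σ => by
      rw [hf]
      simp only
      rw [abs_div, abs_of_pos hε]
      refine div_le_div_of_nonneg_right ?_ hε.le
      · have ha1 := abs_le.1 (hC1 (T σ p.1))
        have ha2 := abs_le.1 (hC2 (T σ p.2))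
        have := le_abs_self (c p)
        have := neg_abs_le (c p)
        exact abs_le.mpr ⟨by linarith [ha1.1, ha2.1], by linarith [ha1.2, ha2.2]⟩
    have hfi : Integrable f μ := int_of_bound hfm _ hfb
    have hgi : Integrable (Real.exp ∘ f) μ :=
      int_of_bound (Real.measurable_exp.comp hfm) (Real.exp ((C₁ + C₂ + |c p|) / ε))
        (fun σ => by
          simp only [Function.comp_apply]
          rw [abs_of_pos (Real.exp_pos _)]
          exact Real.exp_le_exp.mpr ((le_abs_self _).trans (hfb σ)))
    have key := convexOn_exp.map_integral_le Real.continuous_exp.continuousOn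
      isClosed_univ (Filter.Eventually.of_forall fun _ => Set.mem_univ _) hfi hgi
    have hint : ∫ σ, f σ ∂μ = (SSigma μ T γ₁ p.1 + SSigma μ T γ₂ p.2 - c p) / ε := by
      rw [hf]
      simp only
      rw [integral_div]
      congr 1
      have hi1 : Integrable (fun σ => γ₁ (T σ p.1)) μ :=
        int_of_bound (h1.comp (hT.comp measurable_prodMk_right)) C₁ fun σ => hC1 _
      have hi2 : Integrable (fun σ => γ₂ (T σ p.2)) μ :=
        int_of_bound (h2.comp (hT.comp measurable_prodMk_right)) C₂ fun σ => hC2 _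
      have hi12 : Integrable (fun σ => γ₁ (T σ p.1) + γ₂ (T σ p.2)) μ := hi1.add hi2
      rw [integral_sub hi12 (integrable_const _), integral_add hi1 hi2, integral_const]
      simp [SSigma, measure_univ]
    rw [← hint]
    exact key
  -- middle function
  set M : X × X → ℝ := fun p => ∫ σ, Real.exp ((γ₁ (T σ p.1) + γ₂ (T σ p.2) - c p) / ε) ∂μ
    with hM
  have hM_meas : Measurable M := hg_meas.stronglyMeasurable.integral_prod_right'.measurable
  have hM_bound : ∀ p, |M p| ≤ B := by
    intro p
    have h := norm_integral_le_of_norm_le_const (μ := μ)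
      (f := fun σ => Real.exp ((γ₁ (T σ p.1) + γ₂ (T σ p.2) - c p) / ε)) (C := B)
      (Filter.Eventually.of_forall fun σ => by
        rw [Real.norm_eq_abs]; exact hg_bound ((p, σ) : (X × X) × G))
    simpa [hM, Real.norm_eq_abs, measure_univ] using h
  have hLHS : Integrable
      (fun p : X × X => Real.exp ((SSigma μ T γ₁ p.1 + SSigma μ T γ₂ p.2 - c p) / ε))
      (P.prod Q) := by
    apply int_of_bound ?_ B ?_
    · apply Measurable.exp
      exact ((((ssigma_measurable μ T hT h1).comp measurable_fst).add
        ((ssigma_measurable μ T hT h2).comp measurable_snd)).sub hc_meas).div_const ε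
    · intro p
      rw [abs_of_pos (Real.exp_pos _)]
      apply Real.exp_le_exp.mpr
      refine div_le_div_of_nonneg_right ?_ hε.le
      · have := (abs_le.1 (ssigma_bound μ T hC1 p.1)).2
        have := (abs_le.1 (ssigma_bound μ T hC2 p.2)).2
        have := hc_nonneg p
        linarith
  have hMint : Integrable M (P.prod Q) := int_of_bound hM_meas B hM_bound
  have step1 : ∫ p, Real.exp ((SSigma μ T γ₁ p.1 + SSigma μ T γ₂ p.2 - c p) / ε) ∂(P.prod Q)
      ≤ ∫ p, M p ∂(P.prod Q) := integral_mono hLHS hMint jensen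
  have hgint : Integrable (Function.uncurry fun (p : X × X) (σ : G) =>
      Real.exp ((γ₁ (T σ p.1) + γ₂ (T σ p.2) - c p) / ε)) ((P.prod Q).prod μ) :=
    int_of_bound hg_meas B hg_bound
  have step2 : ∫ p, M p ∂(P.prod Q)
      = ∫ σ, ∫ p, Real.exp ((γ₁ (T σ p.1) + γ₂ (T σ p.2) - c p) / ε) ∂(P.prod Q) ∂μ :=
    integral_integral_swap hgint
  have hF_meas : Measurable fun p : X × X => Real.exp ((γ₁ p.1 + γ₂ p.2 - c p) / ε) := by
    apply Measurable.exp
    exact (((h1.comp measurable_fst).add (h2.comp measurable_snd)).sub hc_meas).div_const ε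
  have step3 : ∀ σ : G, ∫ p, Real.exp ((γ₁ (T σ p.1) + γ₂ (T σ p.2) - c p) / ε) ∂(P.prod Q)
      = ∫ p, Real.exp ((γ₁ p.1 + γ₂ p.2 - c p) / ε) ∂(P.prod Q) := by
    intro σ
    have hmap := integral_map_of_stronglyMeasurable (μ := P.prod Q) ((hTσ σ).prodMap (hTσ σ))
      hF_meas.stronglyMeasurable
    rw [← Measure.map_prod_map _ _ (hTσ σ) (hTσ σ), hPinv, hQinv] at hmap
    refine Eq.trans ?_ hmap.symm
    refine integral_congr_ae (Filter.Eventually.of_forall fun p => ?_)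
    show Real.exp ((γ₁ (T σ p.1) + γ₂ (T σ p.2) - c p) / ε)
      = Real.exp ((γ₁ (T σ p.1) + γ₂ (T σ p.2) - c (T σ p.1, T σ p.2)) / ε)
    rw [hc_inv σ p.1 p.2]
  calc ∫ p, Real.exp ((SSigma μ T γ₁ p.1 + SSigma μ T γ₂ p.2 - c p) / ε) ∂(P.prod Q)
      ≤ ∫ p, M p ∂(P.prod Q) := step1
    _ = ∫ σ, ∫ p, Real.exp ((γ₁ (T σ p.1) + γ₂ (T σ p.2) - c p) / ε) ∂(P.prod Q) ∂μ := step2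
    _ = ∫ σ, (∫ p, Real.exp ((γ₁ p.1 + γ₂ p.2 - c p) / ε) ∂(P.prod Q)) ∂μ :=
        integral_congr_ae (Filter.Eventually.of_forall step3)
    _ = ∫ p, Real.exp ((γ₁ p.1 + γ₂ p.2 - c p) / ε) ∂(P.prod Q) := by simp

private lemma wce_key (μ : Measure G) [IsProbabilityMeasure μ]
    (hμr : ∀ σ : G, Measure.map (fun τ => τ * σ) μ = μ)
    (hmulc : ∀ τ : G, Measurable fun σ : G => σ * τ)
    (T : G → X → X) (hT : Measurable fun p : G × X => T p.1 p.2)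
    (hTmul : ∀ σ₁ σ₂ : G, T σ₁ ∘ T σ₂ = T (σ₁ * σ₂))
    (ε : ℝ) (hε : 0 < ε)
    (c : X × X → ℝ) (hc_meas : Measurable c) (hc_nonneg : ∀ p, 0 ≤ c p)
    (hc_inv : ∀ σ : G, ∀ x y : X, c (T σ x, T σ y) = c (x, y))
    (Γ : Set ((X → ℝ) × (X → ℝ)))
    (hΓb : ∀ γ ∈ Γ, γ.1 ∈ Mb X ∧ γ.2 ∈ Mb X)
    (hSΓ : (fun γ : (X → ℝ) × (X → ℝ) => (SSigma μ T γ.1, SSigma μ T γ.2)) '' Γ ⊆ Γ)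
    (Q P : Measure X) [IsProbabilityMeasure Q] [IsProbabilityMeasure P]
    (hQinv : ∀ σ : G, Measure.map (T σ) Q = Q)
    (hPinv : ∀ σ : G, Measure.map (T σ) P = P) :
    Wce c ε Γ Q P
      = Wce c ε {γ ∈ Γ | (∀ σ : G, γ.1 ∘ T σ = γ.1) ∧ (∀ σ : G, γ.2 ∘ T σ = γ.2)} Q P := by
  unfold Wce
  apply le_antisymm
  · refine iSup₂_le fun γ hγ => ?_
    obtain ⟨⟨h1m, C₁, hC1⟩, ⟨h2m, C₂, hC2⟩⟩ := hΓb γ hγ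
    set γ' : (X → ℝ) × (X → ℝ) := (SSigma μ T γ.1, SSigma μ T γ.2) with hγ'
    have hγ'Γ : γ' ∈ Γ := hSΓ ⟨γ, hγ, rfl⟩
    have hγ'mem : γ' ∈ {γ ∈ Γ | (∀ σ : G, γ.1 ∘ T σ = γ.1) ∧ (∀ σ : G, γ.2 ∘ T σ = γ.2)} :=
      ⟨hγ'Γ, fun σ => ssigma_inv μ hμr hmulc T hT hTmul h1m σ,
        fun σ => ssigma_inv μ hμr hmulc T hT hTmul h2m σ⟩
    refine le_iSup₂_of_le γ' hγ'mem ?_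
    apply EReal.coe_le_coe_iff.mpr
    have e1 : ∫ x, γ'.1 x ∂P = ∫ x, γ.1 x ∂P := ssigma_integral μ T hT hPinv h1m hC1
    have e2 : ∫ x, γ'.2 x ∂Q = ∫ x, γ.2 x ∂Q := ssigma_integral μ T hT hQinv h2m hC2
    have e3 : ∫ p, Real.exp ((γ'.1 p.1 + γ'.2 p.2 - c p) / ε) ∂(P.prod Q)
        ≤ ∫ p, Real.exp ((γ.1 p.1 + γ.2 p.2 - c p) / ε) ∂(P.prod Q) :=
      ssigma_exp_le μ T hT ε hε c hc_meas hc_nonneg hc_inv Q P hQinv hPinv h1m h2m hC1 hC2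
    rw [e1, e2]
    have := mul_le_mul_of_nonneg_left e3 hε.le
    linarith
  · exact biSup_mono fun γ hγ => hγ.1

end Helpers

/-- Theorem 3.1 / Theorem B.1 for Sinkhorn divergences: if the cost `c`
is `Σ`-invariant, `S_Σ[Γ] ⊆ Γ` (componentwise symmetrization), and `Q, P` are
`Σ`-invariant probability measures, then `W_{c,ε}^Γ(Q,P) = W_{c,ε}^{Γ_Σ^{inv}}(Q,P)` and
consequently `SD_{c,ε}^Γ(Q,P) = SD_{c,ε}^{Γ_Σ^{inv}}(Q,P)`. -/
theorem sinkhorn_invariant_discriminator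
    {X : Type*} [MeasurableSpace X]
    {G : Type*} [Group G] [TopologicalSpace G] [IsTopologicalGroup G]
    [CompactSpace G] [T2Space G] [MeasurableSpace G] [BorelSpace G]
    (μ : Measure G) [IsProbabilityMeasure μ]
    (hμl : ∀ σ : G, Measure.map (fun τ => σ * τ) μ = μ)
    (hμr : ∀ σ : G, Measure.map (fun τ => τ * σ) μ = μ)
    (T : G → X → X)
    (hT : Measurable fun p : G × X => T p.1 p.2)
    (hT1 : T 1 = id)
    (hTmul : ∀ σ₁ σ₂ : G, T σ₁ ∘ T σ₂ = T (σ₁ * σ₂))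
    (ε : ℝ) (hε : 0 < ε)
    (c : X × X → ℝ) (hc_meas : Measurable c) (hc_nonneg : ∀ p, 0 ≤ c p)
    (hc_inv : ∀ σ : G, ∀ x y : X, c (T σ x, T σ y) = c (x, y))
    (Γ : Set ((X → ℝ) × (X → ℝ)))
    (hΓb : ∀ γ ∈ Γ, γ.1 ∈ Mb X ∧ γ.2 ∈ Mb X)
    (hSΓ : (fun γ : (X → ℝ) × (X → ℝ) => (SSigma μ T γ.1, SSigma μ T γ.2)) '' Γ ⊆ Γ)
    (Q P : Measure X) [IsProbabilityMeasure Q] [IsProbabilityMeasure P]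
    (hQinv : ∀ σ : G, Measure.map (T σ) Q = Q)
    (hPinv : ∀ σ : G, Measure.map (T σ) P = P) :
    Wce c ε Γ Q P
        = Wce c ε {γ ∈ Γ | (∀ σ : G, γ.1 ∘ T σ = γ.1) ∧ (∀ σ : G, γ.2 ∘ T σ = γ.2)} Q P ∧
    Sinkhorn c ε Γ Q P
        = Sinkhorn c ε {γ ∈ Γ | (∀ σ : G, γ.1 ∘ T σ = γ.1) ∧ (∀ σ : G, γ.2 ∘ T σ = γ.2)}
            Q P := by
  refine ⟨wce_key μ hμr (fun τ => measurable_mul_const τ) T hT hTmul ε hε c hc_meas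
    hc_nonneg hc_inv Γ hΓb hSΓ Q P hQinv hPinv, ?_⟩
  unfold Sinkhorn
  rw [wce_key μ hμr (fun τ => measurable_mul_const τ) T hT hTmul ε hε c hc_meas
      hc_nonneg hc_inv Γ hΓb hSΓ Q P hQinv hPinv,
    wce_key μ hμr (fun τ => measurable_mul_const τ) T hT hTmul ε hε c hc_meas
      hc_nonneg hc_inv Γ hΓb hSΓ Q Q hQinv hQinv,
    wce_key μ hμr (fun τ => measurable_mul_const τ) T hT hTmul ε hε c hc_meas
      hc_nonneg hc_inv Γ hΓb hSΓ P P hPinv hPinv]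
end

section
/- Let Σ be a compact Hausdorff topological group with Haar probability measure μ_Σ acting measurably on a measurable space X. Let V be a subspace of M_b(X)^n (n a positive integer) which is closed under Σ (γ ∘ T_σ ∈ V for all γ ∈ V, σ ∈ Σ, acting componentwise) and satisfies S_Σ[V] ⊂ V, equipped with the weak topology induced by the pairing (γ, ν) ↦ Σ_{i=1}^n ∫ γ^i dν_i with n-tuples of finite signed measures on X. Let H : V × P(X) × P(X) → [−∞, ∞) be an objective functional such that for each pair of probability measures Q, P the map γ ↦ H(γ; Q, P) is concave and upper semicontinuous in this topology, and H(γ ∘ T_σ; Q, P) = H(γ; Q ∘ T_σ^{-1}, P ∘ T_σ^{-1}) for all σ ∈ Σ, γ ∈ V, and Q, P ∈ P(X). Let Γ ⊂ V and define D_H^Γ(Q‖P) = sup_{γ ∈ Γ} H(γ; Q, P). Then for all Σ-invariant Q and P: (1) D_H^Γ(Q‖P) ≤ D_H^{S_Σ[Γ]}(Q‖P); and (2) if in addition S_Σ[Γ] ⊂ Γ, then S_Σ[Γ] = Γ_Σ^{inv} and D_H^Γ(Q‖P) = D_H^{Γ_Σ^{inv}}(Q‖P). -/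
open MeasureTheory

/-- Integration of a real function against a finite signed measure,
`⟨ν, g⟩ = ∫ g dν⁺ − ∫ g dν⁻` (Jordan decomposition). -/
noncomputable def pairSM {X : Type*} [MeasurableSpace X] (ν : SignedMeasure X)
    (g : X → ℝ) : ℝ :=
  ∫ x, g x ∂ν.toJordanDecomposition.posPart - ∫ x, g x ∂ν.toJordanDecomposition.negPart

/-- The `M(X)`-topology on `M_b(X)^n`: the weak topology generated by the linear
functionals `τ_ν(γ) = Σ_{i} ∫ γ^i dν_i` for `n`-tuples `ν` of finite signed measures. -/
noncomputable def MTop (X : Type*) [MeasurableSpace X] (n : ℕ) :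
    TopologicalSpace (Fin n → X → ℝ) :=
  ⨅ ν : Fin n → SignedMeasure X,
    TopologicalSpace.induced (fun γ => ∑ i, pairSM (ν i) (γ i)) inferInstance

section Helpers

variable {X : Type*} [MeasurableSpace X]

lemma mb_integrable {g : X → ℝ} (hg : g ∈ Mb X) (ρ : Measure X) [IsFiniteMeasure ρ] :
    Integrable g ρ := by
  obtain ⟨hm, C, hC⟩ := hg
  exact (integrable_const C).mono' hm.aestronglyMeasurable
    (Filter.Eventually.of_forall fun x => by simpa [Real.norm_eq_abs] using hC x)

lemma Mb.comp {g : X → ℝ} (hg : g ∈ Mb X) {f : X → X} (hf : Measurable f) :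
    g ∘ f ∈ Mb X :=
  ⟨hg.1.comp hf, hg.2.imp fun C hC x => hC (f x)⟩

lemma pairSM_sum (ν : SignedMeasure X) {ι : Type*}
    (t : Finset ι) (w : ι → ℝ) (g : ι → X → ℝ) (hg : ∀ i ∈ t, g i ∈ Mb X) :
    pairSM ν (fun x => ∑ i ∈ t, w i * g i x) = ∑ i ∈ t, w i * pairSM ν (g i) := by
  unfold pairSM
  rw [integral_finset_sum t (fun i hi => (mb_integrable (hg i hi) _).const_mul (w i)),
      integral_finset_sum t (fun i hi => (mb_integrable (hg i hi) _).const_mul (w i)),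
      ← Finset.sum_sub_distrib]
  refine Finset.sum_congr rfl fun i hi => ?_
  rw [integral_const_mul, integral_const_mul, mul_sub]

lemma pairSM_SSigma {G : Type*} [MeasurableSpace G]
    (μ : Measure G) [IsProbabilityMeasure μ] (T : G → X → X)
    (hT : Measurable fun p : G × X => T p.1 p.2)
    {g : X → ℝ} (hg : g ∈ Mb X) (ν : SignedMeasure X) :
    pairSM ν (SSigma μ T g) = ∫ σ, pairSM ν (g ∘ T σ) ∂μ ∧
      Integrable (fun σ => pairSM ν (g ∘ T σ)) μ := by
  obtain ⟨hm, C, hC⟩ := hg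
  have key : ∀ (ρ : Measure X) (_ : IsFiniteMeasure ρ),
      (∫ x, SSigma μ T g x ∂ρ = ∫ σ, ∫ x, g (T σ x) ∂ρ ∂μ) ∧
        Integrable (fun σ => ∫ x, g (T σ x) ∂ρ) μ := by
    intro ρ hρ
    have hmeas : Measurable fun p : X × G => g (T p.2 p.1) :=
      hm.comp (hT.comp measurable_swap)
    have hint : Integrable (Function.uncurry fun (x : X) (σ : G) => g (T σ x)) (ρ.prod μ) := by
      refine (integrable_const C).mono' hmeas.aestronglyMeasurable ?_
      exact Filter.Eventually.of_forall fun p => by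
        simpa [Real.norm_eq_abs, Function.uncurry_def] using hC (T p.2 p.1)
    refine ⟨integral_integral_swap hint, hint.integral_prod_right⟩
  have hpos := key ν.toJordanDecomposition.posPart inferInstance
  have hneg := key ν.toJordanDecomposition.negPart inferInstance
  constructor
  · show (∫ x, SSigma μ T g x ∂_) - (∫ x, SSigma μ T g x ∂_) = _
    rw [hpos.1, hneg.1, ← integral_sub hpos.2 hneg.2]
    rfl
  · exact hpos.2.sub hneg.2

noncomputable def tauSM {n : ℕ} (ν : Fin n → SignedMeasure X) (δ : Fin n → X → ℝ) : ℝ :=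
  ∑ k, pairSM (ν k) (δ k)

lemma tauSM_sum {n : ℕ} (ν : Fin n → SignedMeasure X)
    {ι : Type*} (t : Finset ι) (w : ι → ℝ) (z : ι → Fin n → X → ℝ)
    (hz : ∀ j ∈ t, ∀ k, z j k ∈ Mb X) :
    tauSM ν (∑ j ∈ t, w j • z j) = ∑ j ∈ t, w j * tauSM ν (z j) := by
  unfold tauSM
  have hk : ∀ k : Fin n, (∑ j ∈ t, w j • z j) k = fun x => ∑ j ∈ t, w j * z j k x := by
    intro k; funext x
    simp [Finset.sum_apply, smul_eq_mul]
  calc ∑ k, pairSM (ν k) ((∑ j ∈ t, w j • z j) k)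
      = ∑ k, ∑ j ∈ t, w j * pairSM (ν k) (z j k) := by
        refine Finset.sum_congr rfl fun k _ => ?_
        rw [hk k, pairSM_sum (ν k) t w _ (fun j hj => hz j hj k)]
    _ = ∑ j ∈ t, w j * ∑ k, pairSM (ν k) (z j k) := by
        rw [Finset.sum_comm]
        exact Finset.sum_congr rfl fun j _ => (Finset.mul_sum _ _ _).symm

lemma tauSM_SSigma {G : Type*} [MeasurableSpace G]
    (μ : Measure G) [IsProbabilityMeasure μ] (T : G → X → X)
    (hT : Measurable fun p : G × X => T p.1 p.2) {n : ℕ}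
    (γ : Fin n → X → ℝ) (hγ : ∀ k, γ k ∈ Mb X) (ν : Fin n → SignedMeasure X) :
    tauSM ν (fun k => SSigma μ T (γ k)) = ∫ σ, tauSM ν (fun k => γ k ∘ T σ) ∂μ ∧
      Integrable (fun σ => tauSM ν (fun k => γ k ∘ T σ)) μ := by
  have hpair := fun k => pairSM_SSigma μ T hT (hγ k) (ν k)
  constructor
  · show ∑ k, pairSM (ν k) (SSigma μ T (γ k)) = _
    calc ∑ k, pairSM (ν k) (SSigma μ T (γ k))
        = ∑ k, ∫ σ, pairSM (ν k) (γ k ∘ T σ) ∂μ :=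
          Finset.sum_congr rfl fun k _ => (hpair k).1
      _ = ∫ σ, ∑ k, pairSM (ν k) (γ k ∘ T σ) ∂μ :=
          (integral_finset_sum _ fun k _ => (hpair k).2).symm
  · exact integrable_finset_sum _ fun k _ => (hpair k).2

lemma SSigma_comp_T {G : Type*} [MeasurableSpace G] [Group G]
    (μ : Measure G) (T : G → X → X)
    (hT : Measurable fun p : G × X => T p.1 p.2)
    (hTmul : ∀ σ₁ σ₂ : G, T σ₁ ∘ T σ₂ = T (σ₁ * σ₂))
    {g : X → ℝ} (hm : Measurable g) (σ : G)
    (hms : Measurable (fun τ : G => τ * σ))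
    (hμr : Measure.map (fun τ => τ * σ) μ = μ) :
    (SSigma μ T g) ∘ T σ = SSigma μ T g := by
  funext x
  show ∫ τ, g (T τ (T σ x)) ∂μ = ∫ τ, g (T τ x) ∂μ
  have h1 : ∀ τ : G, T τ (T σ x) = T (τ * σ) x := fun τ => congrFun (hTmul τ σ) x
  simp_rw [h1]
  have hmx : Measurable fun τ : G => g (T τ x) :=
    hm.comp (hT.comp (measurable_id.prodMk measurable_const))
  have h2 : ∫ τ, g (T (τ * σ) x) ∂μ
      = ∫ τ, g (T τ x) ∂(Measure.map (fun τ => τ * σ) μ) :=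
    (integral_map hms.aemeasurable (by rw [hμr]; exact hmx.aestronglyMeasurable)).symm
  rw [h2, hμr]

lemma SSigma_of_invariant {G : Type*} [MeasurableSpace G] (μ : Measure G)
    [IsProbabilityMeasure μ] (T : G → X → X) {g : X → ℝ}
    (hinv : ∀ σ : G, g ∘ T σ = g) : SSigma μ T g = g := by
  funext x
  show ∫ σ, g (T σ x) ∂μ = g x
  have h : ∀ σ : G, g (T σ x) = g x := fun σ => congrFun (hinv σ) x
  simp_rw [h]
  simp

lemma integrable_pi' {α ι : Type*} [MeasurableSpace α] {μ : Measure α} [Fintype ι] [DecidableEq ι]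
    {f : α → ι → ℝ} (hf : ∀ i, Integrable (fun a => f a i) μ) :
    Integrable f μ := by
  have h : f = ∑ i : ι, (fun a => f a i • (Pi.single i 1 : ι → ℝ)) := by
    funext a j
    simp [Finset.sum_apply, Pi.single_apply, mul_ite]
  have h2 : Integrable (fun a => ∑ i : ι, f a i • (Pi.single i 1 : ι → ℝ)) μ :=
    integrable_finset_sum Finset.univ
      (fun i _ => Integrable.smul_const (hf i) ((Pi.single i 1 : ι → ℝ)))
  refine h2.congr (Filter.Eventually.of_forall fun a => ?_)
  funext j
  simp [Finset.sum_apply, Pi.single_apply, mul_ite]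

end Helpers

/-- Theorem 3.2: invariance reduction for general concave, upper
semicontinuous objective functionals `H` on a `Σ`-closed subspace `V ⊆ M_b(X)^n`. -/
theorem general_objective_invariant_discriminator
    {X : Type*} [MeasurableSpace X]
    {G : Type*} [Group G] [TopologicalSpace G] [IsTopologicalGroup G]
    [CompactSpace G] [T2Space G] [MeasurableSpace G] [BorelSpace G]
    (μ : Measure G) [IsProbabilityMeasure μ]
    (hμl : ∀ σ : G, Measure.map (fun τ => σ * τ) μ = μ)
    (hμr : ∀ σ : G, Measure.map (fun τ => τ * σ) μ = μ)
    (T : G → X → X)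
    (hT : Measurable fun p : G × X => T p.1 p.2)
    (hT1 : T 1 = id)
    (hTmul : ∀ σ₁ σ₂ : G, T σ₁ ∘ T σ₂ = T (σ₁ * σ₂))
    (n : ℕ) (hn : 0 < n)
    -- `V` a subspace of `M_b(X)^n`, closed under `Σ` and under symmetrization
    (V : Submodule ℝ (Fin n → X → ℝ))
    (hVb : ∀ γ ∈ V, ∀ i, γ i ∈ Mb X)
    (hVsigma : ∀ γ ∈ V, ∀ σ : G, (fun i => γ i ∘ T σ) ∈ V)
    (hVS : ∀ γ ∈ V, (fun i => SSigma μ T (γ i)) ∈ V)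
    -- the objective functional `H : V × P(X) × P(X) → [−∞,∞)`
    (H : (Fin n → X → ℝ) → Measure X → Measure X → EReal)
    (hHne : ∀ γ ∈ V, ∀ Q P : Measure X, IsProbabilityMeasure Q → IsProbabilityMeasure P →
      H γ Q P ≠ ⊤)
    -- concavity of `γ ↦ H(γ; Q, P)` on `V`
    (hHconc : ∀ Q P : Measure X, IsProbabilityMeasure Q → IsProbabilityMeasure P →
      ∀ γ₁ ∈ V, ∀ γ₂ ∈ V, ∀ t : ℝ, 0 ≤ t → t ≤ 1 →
        (t : EReal) * H γ₁ Q P + ((1 - t : ℝ) : EReal) * H γ₂ Q P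
          ≤ H (t • γ₁ + (1 - t) • γ₂) Q P)
    -- upper semicontinuity of `γ ↦ H(γ; Q, P)` on `V` in the `M(X)`-topology
    (hHusc : ∀ Q P : Measure X, IsProbabilityMeasure Q → IsProbabilityMeasure P →
      @UpperSemicontinuousOn (Fin n → X → ℝ) EReal (MTop X n) _
        (fun γ => H γ Q P) V)
    -- equivariance of `H`
    (hHeq : ∀ σ : G, ∀ γ ∈ V, ∀ Q P : Measure X,
      IsProbabilityMeasure Q → IsProbabilityMeasure P →
      H (fun i => γ i ∘ T σ) Q P = H γ (Measure.map (T σ) Q) (Measure.map (T σ) P))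
    (Γ : Set (Fin n → X → ℝ)) (hΓV : ∀ γ ∈ Γ, γ ∈ V)
    (Q P : Measure X) [IsProbabilityMeasure Q] [IsProbabilityMeasure P]
    (hQinv : ∀ σ : G, Measure.map (T σ) Q = Q)
    (hPinv : ∀ σ : G, Measure.map (T σ) P = P) :
    -- (1) `D_H^Γ(Q‖P) ≤ D_H^{S_Σ[Γ]}(Q‖P)`
    (⨆ γ ∈ Γ, H γ Q P)
      ≤ (⨆ γ ∈ (fun γ : Fin n → X → ℝ => fun i => SSigma μ T (γ i)) '' Γ, H γ Q P) ∧
    -- (2) if moreover `S_Σ[Γ] ⊆ Γ`, then `S_Σ[Γ] = Γ_Σ^{inv}` and `D_H^Γ = D_H^{Γ_Σ^{inv}}`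
    ((fun γ : Fin n → X → ℝ => fun i => SSigma μ T (γ i)) '' Γ ⊆ Γ →
      (fun γ : Fin n → X → ℝ => fun i => SSigma μ T (γ i)) '' Γ
          = {γ ∈ Γ | ∀ i, ∀ σ : G, γ i ∘ T σ = γ i} ∧
      (⨆ γ ∈ Γ, H γ Q P)
          = ⨆ γ ∈ {γ ∈ Γ | ∀ i, ∀ σ : G, γ i ∘ T σ = γ i}, H γ Q P) := by
  classical
  -- finite Jensen inequality for `H`
  have jensen : ∀ (c₀ : ℝ) (ι' : Type) (t : Finset ι'), ∀ (w : ι' → ℝ)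
      (z : ι' → (Fin n → X → ℝ)),
      (∀ i ∈ t, 0 ≤ w i) → (∑ i ∈ t, w i) = 1 → (∀ i ∈ t, z i ∈ V) →
      (∀ i ∈ t, (c₀ : EReal) ≤ H (z i) Q P) →
      (c₀ : EReal) ≤ H (∑ i ∈ t, w i • z i) Q P := by
    intro c₀ ι' t
    induction t using Finset.induction_on with
    | empty =>
      intro w z _ hsum _ _
      rw [Finset.sum_empty] at hsum
      norm_num at hsum
    | @insert a s ha ih =>
      intro w z hw0 hsum hzV hzc
      rw [Finset.sum_insert ha] at hsum
      have hS0 : (0 : ℝ) ≤ ∑ i ∈ s, w i :=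
        Finset.sum_nonneg fun i hi => hw0 i (Finset.mem_insert_of_mem hi)
      rcases hS0.lt_or_eq with hS | hS
      · -- positive remaining mass
        set S : ℝ := ∑ i ∈ s, w i with hSdef
        have hwa0 : 0 ≤ w a := hw0 a (Finset.mem_insert_self a s)
        have hwa1 : w a ≤ 1 := by linarith
        have hSwa : S = 1 - w a := by linarith
        set ζ : Fin n → X → ℝ := ∑ i ∈ s, (w i / S) • z i with hζdef
        have hζV : ζ ∈ V :=
          Submodule.sum_mem V fun i hi =>
            V.smul_mem _ (hzV i (Finset.mem_insert_of_mem hi))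
        have hIH : (c₀ : EReal) ≤ H ζ Q P := by
          refine ih (fun i => w i / S) z
            (fun i hi => div_nonneg (hw0 i (Finset.mem_insert_of_mem hi)) hS0) ?_
            (fun i hi => hzV i (Finset.mem_insert_of_mem hi))
            (fun i hi => hzc i (Finset.mem_insert_of_mem hi))
          rw [← Finset.sum_div]
          exact div_self hS.ne'
        have hrwsum : (∑ i ∈ s, w i • z i) = (1 - w a) • ζ := by
          rw [← hSwa, hζdef, Finset.smul_sum]
          refine Finset.sum_congr rfl fun i hi => ?_
          rw [smul_smul]
          congr 1
          field_simp
        have hrw2 : (∑ i ∈ Insert.insert a s, w i • z i)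
            = w a • z a + (1 - w a) • ζ := by
          rw [Finset.sum_insert ha, hrwsum]
        rw [hrw2]
        refine le_trans ?_ (hHconc Q P inferInstance inferInstance (z a)
          (hzV a (Finset.mem_insert_self a s)) ζ hζV (w a) hwa0 hwa1)
        have hza := hzc a (Finset.mem_insert_self a s)
        obtain ⟨r₁, hr₁⟩ : ∃ r : ℝ, (r : EReal) = H (z a) Q P :=
          EReal.canLift.prf _ ⟨hHne (z a) (hzV a (Finset.mem_insert_self a s)) Q P
            inferInstance inferInstance,
            ((bot_lt_iff_ne_bot.2 (by simp)).trans_le hza).ne'⟩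
        obtain ⟨r₂, hr₂⟩ : ∃ r : ℝ, (r : EReal) = H ζ Q P :=
          EReal.canLift.prf _ ⟨hHne ζ hζV Q P inferInstance inferInstance,
            ((bot_lt_iff_ne_bot.2 (by simp)).trans_le hIH).ne'⟩
        have hc1 : c₀ ≤ r₁ := by
          rw [← hr₁] at hza; exact_mod_cast hza
        have hc2 : c₀ ≤ r₂ := by
          rw [← hr₂] at hIH; exact_mod_cast hIH
        rw [← hr₁, ← hr₂, ← EReal.coe_mul, ← EReal.coe_mul, ← EReal.coe_add,
          EReal.coe_le_coe_iff]
        nlinarith [mul_le_mul_of_nonneg_left hc1 hwa0,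
          mul_le_mul_of_nonneg_left hc2 (by linarith : (0:ℝ) ≤ 1 - w a)]
      · -- remaining mass is zero
        have hall : ∀ i ∈ s, w i = 0 := by
          intro i hi
          have := (Finset.sum_eq_zero_iff_of_nonneg
            (fun j hj => hw0 j (Finset.mem_insert_of_mem hj))).1 hS.symm
          exact this i hi
        have hwa : w a = 1 := by
          have h0 : (∑ i ∈ s, w i) = 0 := hS.symm
          linarith
        have hza' : (∑ i ∈ Insert.insert a s, w i • z i) = z a := by
          rw [Finset.sum_insert ha,
            Finset.sum_eq_zero fun i hi => by rw [hall i hi, zero_smul], hwa,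
            one_smul, add_zero]
        rw [hza']
        exact hzc a (Finset.mem_insert_self a s)
  -- the key inequality: symmetrization does not decrease `H`
  have keyA : ∀ γ ∈ V, H γ Q P ≤ H (fun i => SSigma μ T (γ i)) Q P := by
    intro γ hγV
    by_contra hcon
    push_neg at hcon
    set Sγ : Fin n → X → ℝ := fun i => SSigma μ T (γ i) with hSγdef
    have hγb : ∀ k, γ k ∈ Mb X := hVb γ hγV
    have hSγV : Sγ ∈ V := hVS γ hγV
    have hne := hHne γ hγV Q P inferInstance inferInstance
    obtain ⟨c₀, hc₀⟩ : ∃ r : ℝ, (r : EReal) = H γ Q P :=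
      EReal.canLift.prf _ ⟨hne, (bot_le.trans_lt hcon).ne'⟩
    have horb : ∀ σ : G, H (fun i => γ i ∘ T σ) Q P = (c₀ : EReal) := by
      intro σ
      rw [hHeq σ γ hγV Q P inferInstance inferInstance, hQinv σ, hPinv σ, ← hc₀]
    obtain ⟨b, hb1, hb2⟩ := exists_between (show H Sγ Q P < (c₀ : EReal) from hc₀ ▸ hcon)
    have husc := hHusc Q P inferInstance inferInstance Sγ hSγV b hb1
    obtain ⟨u, humem, husub⟩ :=
      (@mem_nhdsWithin_iff_exists_mem_nhds_inter _ (MTop X n) _ _ _).1 husc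
    have h2 : @nhds _ (MTop X n) Sγ
        = ⨅ ν : Fin n → SignedMeasure X,
            @nhds _ (TopologicalSpace.induced (tauSM ν) inferInstance) Sγ := by
      rw [show MTop X n = ⨅ ν : Fin n → SignedMeasure X,
        TopologicalSpace.induced (tauSM ν) inferInstance from rfl]
      exact nhds_iInf
    rw [h2, Filter.mem_iInf] at humem
    obtain ⟨I, hIfin, W, hW, hu⟩ := humem
    subst hu
    have hWi : ∀ i : I, ∃ ε > 0, ∀ δ : Fin n → X → ℝ,
        |tauSM (i : Fin n → SignedMeasure X) δ
          - tauSM (i : Fin n → SignedMeasure X) Sγ| < ε → δ ∈ W i := by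
      intro i
      have hWmem := hW i
      rw [nhds_induced] at hWmem
      obtain ⟨t, ht, hsub⟩ := Filter.mem_comap.1 hWmem
      obtain ⟨ε, hε, hball⟩ := Metric.mem_nhds_iff.1 ht
      exact ⟨ε, hε, fun δ hδ => hsub (hball (by rwa [Metric.mem_ball, Real.dist_eq]))⟩
    choose εf hεf hWf using hWi
    by_cases hIne : Nonempty I
    case neg =>
      haveI : IsEmpty I := not_nonempty_iff.1 hIne
      have hγu : γ ∈ ⋂ i : I, W i := by
        rw [Set.iInter_of_empty]; trivial
      have := husub ⟨hγu, hγV⟩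
      simp only [Set.mem_setOf_eq] at this
      rw [← hc₀] at this
      exact absurd (this.trans hb2) (lt_irrefl _)
    case pos =>
      haveI := hIne
      haveI := hIfin.fintype
      set ε : ℝ := Finset.univ.inf' Finset.univ_nonempty εf with hεdef
      have hε : 0 < ε := (Finset.lt_inf'_iff _).2 fun i _ => hεf i
      have hεle : ∀ i : I, ε ≤ εf i := fun i => Finset.inf'_le _ (Finset.mem_univ i)
      set g : G → (I → ℝ) :=
        fun σ i => tauSM (i : Fin n → SignedMeasure X) (fun k => γ k ∘ T σ) with hgdef
      have hcomp := fun (ν : Fin n → SignedMeasure X) => tauSM_SSigma μ T hT γ hγb ν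
      have hgInt : Integrable g μ := integrable_pi' fun i => (hcomp (i : _)).2
      have hproj : ∀ i : I, (∫ σ, g σ ∂μ) i = ∫ σ, g σ i ∂μ := by
        intro i
        exact ((ContinuousLinearMap.proj (R := ℝ) (φ := fun _ : I => ℝ) i).integral_comp_comm
          hgInt).symm
      have hΦint : (fun i : I => tauSM (i : Fin n → SignedMeasure X) Sγ) = ∫ σ, g σ ∂μ := by
        funext i
        rw [hproj i, (hcomp (i : _)).1]
      have hmem : (fun i : I => tauSM (i : Fin n → SignedMeasure X) Sγ)
          ∈ closure (convexHull ℝ (Set.range g)) := by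
        rw [hΦint]
        exact (convex_convexHull ℝ _).closure.integral_mem isClosed_closure
          (Filter.Eventually.of_forall fun σ =>
            subset_closure (subset_convexHull ℝ _ (Set.mem_range_self σ))) hgInt
      obtain ⟨p, hp, hdist⟩ := Metric.mem_closure_iff.1 hmem ε hε
      rw [convexHull_eq] at hp
      obtain ⟨ι', t, w, z, hw0, hw1, hzr, hcm⟩ := hp
      have hθex : ∀ j ∈ t, ∃ σ : G, g σ = z j := fun j hj => Set.mem_range.1 (hzr j hj)
      choose! θ hθ using hθex
      set zfun : ι' → (Fin n → X → ℝ) := fun j => (fun k => γ k ∘ T (θ j)) with hzfdef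
      set δ : Fin n → X → ℝ := ∑ j ∈ t, w j • zfun j with hδdef
      have hδV : δ ∈ V :=
        Submodule.sum_mem V fun j hj => V.smul_mem _ (hVsigma γ hγV (θ j))
      have hδc : (c₀ : EReal) ≤ H δ Q P := by
        refine jensen c₀ ι' t w zfun hw0 hw1
          (fun j hj => hVsigma γ hγV (θ j)) (fun j hj => le_of_eq (horb (θ j)).symm)
      have hzMb : ∀ j ∈ t, ∀ k, zfun j k ∈ Mb X := by
        intro j hj k
        exact Mb.comp (hγb k) (hT.comp (measurable_const.prodMk measurable_id))
      have hτδ : ∀ i : I, tauSM (i : Fin n → SignedMeasure X) δ = p i := by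
        intro i
        calc tauSM (i : Fin n → SignedMeasure X) δ
            = ∑ j ∈ t, w j * tauSM (i : Fin n → SignedMeasure X) (zfun j) :=
              tauSM_sum _ t w zfun hzMb
          _ = ∑ j ∈ t, w j * z j i := by
              refine Finset.sum_congr rfl fun j hj => ?_
              rw [show tauSM (i : Fin n → SignedMeasure X) (zfun j) = g (θ j) i from rfl,
                hθ j hj]
          _ = p i := by
              rw [← hcm, Finset.centerMass_eq_of_sum_1 _ _ hw1]
              simp [Finset.sum_apply]
      have hδW : ∀ i : I, δ ∈ W i := by
        intro i
        refine hWf i δ ?_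
        have hdi := (dist_pi_lt_iff hε).1 hdist i
        rw [Real.dist_eq] at hdi
        have : |tauSM (i : Fin n → SignedMeasure X) δ
            - tauSM (i : Fin n → SignedMeasure X) Sγ| < ε := by
          rw [hτδ i, abs_sub_comm]
          exact hdi
        exact this.trans_le (hεle i)
      have hδmem : δ ∈ (⋂ i : I, W i) ∩ (V : Set (Fin n → X → ℝ)) :=
        ⟨Set.mem_iInter.2 hδW, hδV⟩
      have hlt := husub hδmem
      simp only [Set.mem_setOf_eq] at hlt
      exact absurd (lt_of_le_of_lt hδc (hlt.trans hb2)) (lt_irrefl _)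
  -- part (1)
  have key1 : (⨆ γ ∈ Γ, H γ Q P)
      ≤ ⨆ γ ∈ (fun γ : Fin n → X → ℝ => fun i => SSigma μ T (γ i)) '' Γ, H γ Q P := by
    refine iSup₂_le fun γ hγ => ?_
    refine le_trans (keyA γ (hΓV γ hγ)) ?_
    exact le_iSup₂ (f := fun δ (_ : δ ∈ (fun γ : Fin n → X → ℝ =>
      fun i => SSigma μ T (γ i)) '' Γ) => H δ Q P) _ ⟨γ, hγ, rfl⟩
  refine ⟨key1, fun hsub => ?_⟩
  have hset : (fun γ : Fin n → X → ℝ => fun i => SSigma μ T (γ i)) '' Γ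
      = {γ ∈ Γ | ∀ i, ∀ σ : G, γ i ∘ T σ = γ i} := by
    apply Set.Subset.antisymm
    · rintro δ ⟨γ, hγ, rfl⟩
      refine ⟨hsub ⟨γ, hγ, rfl⟩, ?_⟩
      intro i σ
      exact SSigma_comp_T μ T hT hTmul (hVb γ (hΓV γ hγ) i).1 σ
        (measurable_mul_const σ) (hμr σ)
    · rintro δ ⟨hδΓ, hδinv⟩
      exact ⟨δ, hδΓ, funext fun i => SSigma_of_invariant μ T (fun σ => hδinv i σ)⟩
  refine ⟨hset, le_antisymm ?_ ?_⟩
  · rw [← hset]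
    exact key1
  · refine iSup₂_le fun γ hγ => ?_
    exact le_iSup₂ (f := fun δ (_ : δ ∈ Γ) => H δ Q P) γ hγ.1
end

section
/- Let K = (K_x)_{x ∈ X} be a probability kernel from a measurable space X to itself, with associated operators S_K[γ](x) = ∫ γ(x') K_x(dx') on bounded measurable functions and S^K[P] = ∫ K_x(·) P(dx) on probability measures. Let f : [0,∞) → ℝ be convex and lower semicontinuous with f(1) = 0 and f strictly convex at 1, and let Γ ⊂ M_b(X) satisfy S_K[Γ] ⊂ Γ. If Q and P are K-invariant probability measures (S^K[Q] = Q and S^K[P] = P), then the (f,Γ)-divergence satisfies D_f^Γ(Q‖P) = D_f^{S_K[Γ]}(Q‖P), and likewise the Γ-integral probability metric satisfies W^Γ(Q,P) = W^{S_K[Γ]}(Q,P). -/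
open MeasureTheory
open scoped ENNReal

/-- The operator `S_K[γ](x) = ∫ γ(x') K_x(dx')` associated to a probability kernel `K`. -/
noncomputable def SK {X : Type*} [MeasurableSpace X] (K : ProbabilityTheory.Kernel X X)
    (γ : X → ℝ) : X → ℝ :=
  fun x => ∫ x', γ x' ∂(K x)

/-! ### helper lemmas -/
lemma e_coe (r : ℝ) : erealToENNReal (r : EReal) = ENNReal.ofReal r := rfl
lemma e_bot : erealToENNReal ⊥ = 0 := rfl
lemma e_top : erealToENNReal ⊤ = ⊤ := rfl

lemma eMono : Monotone erealToENNReal := by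
  intro a b h
  induction a using EReal.rec <;> induction b using EReal.rec <;>
    simp_all [e_bot, e_top, e_coe]
  exact ENNReal.ofReal_le_ofReal (by exact_mod_cast h)

lemma eMeas : Measurable erealToENNReal := eMono.measurable

lemma coe_ennreal_toReal' {w : ℝ≥0∞} (hw : w ≠ ⊤) : (w : EReal) = ((w.toReal : ℝ) : EReal) := by
  conv_lhs => rw [← ENNReal.ofReal_toReal hw]
  rw [EReal.coe_ennreal_ofReal, max_eq_left ENNReal.toReal_nonneg]

lemma e_le_of_le_coe {z : EReal} {w : ℝ≥0∞} (h : z ≤ (w : EReal)) :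
    erealToENNReal z ≤ w := by
  rcases eq_or_ne w ⊤ with hw | hw
  · simp [hw]
  induction z using EReal.rec with
  | bot => simp [e_bot]
  | top => simp [coe_ennreal_toReal' hw] at h
  | coe r =>
    rw [coe_ennreal_toReal' hw] at h
    rw [e_coe]
    calc ENNReal.ofReal r ≤ ENNReal.ofReal w.toReal :=
          ENNReal.ofReal_le_ofReal (by exact_mod_cast h)
      _ = w := ENNReal.ofReal_toReal hw

lemma ofReal_integral_le {X : Type*} [MeasurableSpace X] {μ : Measure X} {g : X → ℝ}
    (hg : Integrable g μ) :
    ENNReal.ofReal (∫ x, g x ∂μ) ≤ ∫⁻ x, ENNReal.ofReal (g x) ∂μ := by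
  have h1 : ∫ x, g x ∂μ ≤ ∫ x, max (g x) 0 ∂μ :=
    integral_mono hg (hg.pos_part) (fun x => le_max_left _ _)
  calc ENNReal.ofReal (∫ x, g x ∂μ) ≤ ENNReal.ofReal (∫ x, max (g x) 0 ∂μ) :=
        ENNReal.ofReal_le_ofReal h1
    _ = ∫⁻ x, ENNReal.ofReal (max (g x) 0) ∂μ :=
        ofReal_integral_eq_lintegral_ofReal hg.pos_part
          (Filter.Eventually.of_forall fun x => le_max_right _ _)
    _ = ∫⁻ x, ENNReal.ofReal (g x) ∂μ := by
        congr 1; funext x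
        rcases le_total (g x) 0 with h | h
        · simp [max_eq_right h, ENNReal.ofReal_of_nonpos h]
        · simp [max_eq_left h]

lemma integrable_of_bound' {X : Type*} [MeasurableSpace X] {μ : Measure X} [IsFiniteMeasure μ]
    {γ : X → ℝ} {C : ℝ} (hm : Measurable γ) (hb : ∀ x, |γ x| ≤ C) : Integrable γ μ :=
  ⟨hm.aestronglyMeasurable, HasFiniteIntegral.of_bounded (C := C)
    (Filter.Eventually.of_forall fun x => by simpa using hb x)⟩

lemma legendre_mono (f : ℝ → ℝ) : Monotone (legendre f) := by
  intro a b h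
  refine iSup₂_le fun t ht => ?_
  refine le_iSup₂_of_le t ht ?_
  exact_mod_cast sub_le_sub_right (mul_le_mul_of_nonneg_right h ht) _

lemma legendre_ge (f : ℝ → ℝ) (hf1 : f 1 = 0) (y : ℝ) : (y : EReal) ≤ legendre f y :=
  le_iSup₂_of_le 1 (by norm_num) (by simp [hf1])

lemma legendre_meas (f : ℝ → ℝ) : Measurable (legendre f) := (legendre_mono f).measurable

lemma coe_le_legendre (f : ℝ → ℝ) {t : ℝ} (ht : 0 ≤ t) (y : ℝ) :
    ((y * t - f t : ℝ) : EReal) ≤ legendre f y := le_iSup₂_of_le t ht le_rfl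

lemma e_add_const {z : EReal} {C : ℝ} (hC : 0 ≤ C) (hz : ((-C : ℝ) : EReal) ≤ z) :
    erealToENNReal (z + (C : ℝ)) =
      erealToENNReal z + (ENNReal.ofReal C - erealToENNReal (-z)) := by
  induction z using EReal.rec with
  | bot => simp at hz
  | top =>
    rw [EReal.top_add_coe]
    simp [e_bot, e_top]
  | coe r =>
    have hr : -C ≤ r := by exact_mod_cast hz
    have : ((r : EReal) + (C : ℝ)) = ((r + C : ℝ) : EReal) := by norm_cast
    rw [this, ← EReal.coe_neg, e_coe, e_coe, e_coe]
    rcases le_total 0 r with h | h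
    · rw [ENNReal.ofReal_add h hC, ENNReal.ofReal_of_nonpos (neg_nonpos.2 h), tsub_zero]
    · rw [ENNReal.ofReal_of_nonpos h, zero_add,
        ← ENNReal.ofReal_sub C (by linarith : (0:ℝ) ≤ -r)]
      ring_nf

lemma eIntegral_shift {X : Type*} [MeasurableSpace X] {P : Measure X} [IsProbabilityMeasure P]
    {g : X → EReal} (hg : Measurable g) {C : ℝ} (hC : 0 ≤ C)
    (hb : ∀ x, ((-C : ℝ) : EReal) ≤ g x) :
    eIntegral P g
      = ((∫⁻ x, erealToENNReal (g x + (C : ℝ)) ∂P : ℝ≥0∞) : EReal) - (C : EReal) := by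
  set u := ∫⁻ x, erealToENNReal (g x) ∂P with hu
  set v := ∫⁻ x, erealToENNReal (-(g x)) ∂P with hv
  have hvle : v ≤ ENNReal.ofReal C := by
    calc v ≤ ∫⁻ _, ENNReal.ofReal C ∂P := by
          refine lintegral_mono fun x => ?_
          rw [← e_coe]
          exact eMono (by
            rw [EReal.neg_le, ← EReal.coe_neg]
            exact hb x)
      _ = ENNReal.ofReal C := by simp
  have hvt : v ≠ ⊤ := (hvle.trans_lt ENNReal.ofReal_lt_top).ne
  have hW : ∫⁻ x, erealToENNReal (g x + (C : ℝ)) ∂P = u + (ENNReal.ofReal C - v) := by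
    have hpt : ∀ x, erealToENNReal (g x + (C : ℝ))
        = erealToENNReal (g x) + (ENNReal.ofReal C - erealToENNReal (-(g x))) :=
      fun x => e_add_const hC (hb x)
    simp_rw [hpt]
    rw [lintegral_add_left (f := fun x => erealToENNReal (g x)) (eMeas.comp hg)]
    congr 1
    rw [lintegral_sub (g := fun x => erealToENNReal (-(g x))) (eMeas.comp hg.neg)
      (by simpa using hvt)
      (Filter.Eventually.of_forall fun x => by
        rw [← e_coe]
        exact eMono (by
          rw [EReal.neg_le, ← EReal.coe_neg]
          exact hb x))]
    simp [hv]
  rw [hW, eIntegral, ← hu, ← hv]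
  rcases eq_or_ne u ⊤ with hut | hut
  · rw [hut, top_add, EReal.coe_ennreal_top, EReal.top_sub_coe,
      coe_ennreal_toReal' hvt, EReal.top_sub_coe]
  · have hWt : u + (ENNReal.ofReal C - v) ≠ ⊤ :=
      ENNReal.add_ne_top.2 ⟨hut, (tsub_le_self.trans_lt ENNReal.ofReal_lt_top).ne⟩
    rw [coe_ennreal_toReal' hvt, coe_ennreal_toReal' hut, coe_ennreal_toReal' hWt]
    rw [← EReal.coe_sub, ← EReal.coe_sub]
    norm_cast
    rw [ENNReal.toReal_add hut (tsub_le_self.trans_lt ENNReal.ofReal_lt_top).ne,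
      ENNReal.toReal_sub_of_le hvle ENNReal.ofReal_lt_top.ne, ENNReal.toReal_ofReal hC]
    ring

lemma abs_integral_le_of_bound {X : Type*} [MeasurableSpace X] (μ : Measure X)
    [IsProbabilityMeasure μ] {γ : X → ℝ} {C : ℝ} (hb : ∀ x, |γ x| ≤ C) :
    |∫ x, γ x ∂μ| ≤ C := by
  have := norm_integral_le_of_norm_le_const (μ := μ) (f := γ) (C := C)
    (Filter.Eventually.of_forall fun x => by simpa using hb x)
  simpa using this

lemma key_ofReal {X : Type*} [MeasurableSpace X] (ρ : Measure X) [IsProbabilityMeasure ρ]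
    {δ : X → ℝ} {C : ℝ} (hm : Measurable δ) (hb : ∀ x, |δ x| ≤ C) :
    ENNReal.ofReal ((∫ x, δ x ∂ρ) + C) = ∫⁻ x, ENNReal.ofReal (δ x + C) ∂ρ := by
  have hint : Integrable δ ρ := integrable_of_bound' hm hb
  have h1 : (∫ x, δ x ∂ρ) + C = ∫ x, (δ x + C) ∂ρ := by
    rw [integral_add hint (integrable_const C), integral_const]; simp
  have hint2 : Integrable (fun x => δ x + C) ρ :=
    integrable_of_bound' (hm.add_const C)
      (fun x => (abs_add_le _ _).trans (add_le_add (hb x) (le_refl |C|)))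
  rw [h1, ofReal_integral_eq_lintegral_ofReal hint2
    (Filter.Eventually.of_forall fun x => by
      simp only [Pi.zero_apply]; linarith [(abs_le.1 (hb x)).1])]

lemma integral_SK_inv {X : Type*} [MeasurableSpace X] (K : ProbabilityTheory.Kernel X X)
    [ProbabilityTheory.IsMarkovKernel K] {μ : Measure X} [IsProbabilityMeasure μ]
    (hinv : μ.bind (fun x => K x) = μ) {γ : X → ℝ} {C : ℝ}
    (hm : Measurable γ) (hb : ∀ x, |γ x| ≤ C) (hSm : Measurable (SK K γ)) :
    ∫ x, SK K γ x ∂μ = ∫ x, γ x ∂μ := by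
  have hSb : ∀ x, |SK K γ x| ≤ C := fun x => abs_integral_le_of_bound (K x) hb
  have hchain : ENNReal.ofReal ((∫ x, γ x ∂μ) + C)
      = ENNReal.ofReal ((∫ x, SK K γ x ∂μ) + C) := by
    calc ENNReal.ofReal ((∫ x, γ x ∂μ) + C)
        = ∫⁻ x, ENNReal.ofReal (γ x + C) ∂μ := key_ofReal μ hm hb
      _ = ∫⁻ x, ENNReal.ofReal (γ x + C) ∂(μ.bind (fun x => K x)) := by rw [hinv]
      _ = ∫⁻ x, ∫⁻ x', ENNReal.ofReal (γ x' + C) ∂(K x) ∂μ :=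
          Measure.lintegral_bind (K.measurable.aemeasurable) ((hm.add_const C).ennreal_ofReal.aemeasurable)
      _ = ∫⁻ x, ENNReal.ofReal (SK K γ x + C) ∂μ :=
          lintegral_congr fun x => (key_ofReal (K x) hm hb).symm
      _ = ENNReal.ofReal ((∫ x, SK K γ x ∂μ) + C) := (key_ofReal μ hSm hSb).symm
  have h2 := (ENNReal.ofReal_eq_ofReal_iff
    (by have := (abs_le.1 (abs_integral_le_of_bound μ hb)).1; linarith)
    (by have := (abs_le.1 (abs_integral_le_of_bound μ hSb)).1; linarith)).1 hchain
  linarith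

lemma lambda_SK_le {X : Type*} [MeasurableSpace X] (K : ProbabilityTheory.Kernel X X)
    [ProbabilityTheory.IsMarkovKernel K] (f : ℝ → ℝ) (hf1 : f 1 = 0)
    {P : Measure X} [IsProbabilityMeasure P] (hPinv : P.bind (fun x => K x) = P)
    {γ : X → ℝ} {C : ℝ} (hm : Measurable γ) (hb : ∀ x, |γ x| ≤ C)
    (hSm : Measurable (SK K γ)) :
    LambdaF f P (SK K γ) ≤ LambdaF f P γ := by
  refine iInf_mono fun ν => add_le_add_right ?_ _
  set C' : ℝ := C + |ν| with hC'def
  have hne : Nonempty X := by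
    by_contra hne
    have h1 := measure_univ (μ := P)
    rw [Set.univ_eq_empty_iff.2 (not_nonempty_iff.1 hne)] at h1
    simp at h1
  have hC'0 : 0 ≤ C' := by
    have h0 : 0 ≤ C := (abs_nonneg _).trans (hb (Classical.choice hne))
    positivity
  set h : X → ℝ := fun x => γ x - ν with hhdef
  have hmh : Measurable h := hm.sub measurable_const
  have hbh : ∀ x, |h x| ≤ C' := fun x => abs_le.2
    ⟨by have h1 := (abs_le.1 (hb x)).1; have h2 := le_abs_self ν
        show -(C + |ν|) ≤ γ x - ν; linarith,
     by have h1 := (abs_le.1 (hb x)).2; have h2 := neg_abs_le ν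
        show γ x - ν ≤ C + |ν|; linarith⟩
  have hSK : ∀ x, SK K γ x - ν = ∫ x', h x' ∂(K x) := by
    intro x
    rw [hhdef]
    rw [integral_sub (integrable_of_bound' hm hb) (integrable_const ν), integral_const]
    simp [SK]
  have hbS : ∀ x, |SK K γ x - ν| ≤ C' := fun x => by
    rw [hSK x]; exact abs_integral_le_of_bound (K x) hbh
  have hg1lb : ∀ x, ((-C' : ℝ) : EReal) ≤ legendre f (SK K γ x - ν) := fun x =>
    le_trans (by exact_mod_cast (abs_le.1 (hbS x)).1) (legendre_ge f hf1 _)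
  have hg2lb : ∀ x, ((-C' : ℝ) : EReal) ≤ legendre f (h x) := fun x =>
    le_trans (by exact_mod_cast (abs_le.1 (hbh x)).1) (legendre_ge f hf1 _)
  rw [eIntegral_shift (g := fun x => legendre f (SK K γ x - ν))
        ((legendre_meas f).comp (hSm.sub measurable_const)) hC'0 hg1lb,
      eIntegral_shift (g := fun x => legendre f (γ x - ν))
        ((legendre_meas f).comp (hm.sub measurable_const)) hC'0 hg2lb]
  refine EReal.sub_le_sub (EReal.coe_ennreal_le_coe_ennreal_iff.2 ?_) le_rfl
  set Φ : ℝ → ℝ≥0∞ := fun y => erealToENNReal (legendre f y + ((C' : ℝ) : EReal)) with hΦdef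
  have hΦmono : Monotone (fun y => legendre f y + ((C' : ℝ) : EReal)) :=
    fun a b hab => add_le_add_left (legendre_mono f hab) _
  have hΦmeas : Measurable Φ := eMeas.comp hΦmono.measurable
  have hB : ∫⁻ x, Φ (h x) ∂P = ∫⁻ x, ∫⁻ x', Φ (h x') ∂(K x) ∂P := by
    conv_lhs => rw [← hPinv]
    exact Measure.lintegral_bind K.measurable.aemeasurable (hΦmeas.comp hmh).aemeasurable
  have hjensen : ∀ x, Φ (SK K γ x - ν) ≤ ∫⁻ x', Φ (h x') ∂(K x) := by
    intro x
    set I := ∫⁻ x', Φ (h x') ∂(K x) with hIdef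
    refine e_le_of_le_coe ?_
    rcases eq_or_ne I ⊤ with hI | hI
    · rw [hI, EReal.coe_ennreal_top]; exact le_top
    · rw [coe_ennreal_toReal' hI]
      set J := I.toReal with hJdef
      have hstep : ∀ t, 0 ≤ t → (SK K γ x - ν) * t - f t + C' ≤ J := by
        intro t ht
        have hbint : ∀ x', |h x' * t - f t + C'| ≤ C' * |t| + |f t| + |C'| := by
          intro x'
          calc |h x' * t - f t + C'| ≤ |h x' * t - f t| + |C'| := abs_add_le _ _
            _ ≤ |h x' * t| + |f t| + |C'| := by
                have := abs_sub (h x' * t) (f t)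
                linarith
            _ ≤ C' * |t| + |f t| + |C'| := by
                rw [abs_mul]
                have := mul_le_mul_of_nonneg_right (hbh x') (abs_nonneg t)
                linarith
        have hint : Integrable (fun x' => h x' * t - f t + C') (K x) :=
          integrable_of_bound' (((hmh.mul_const t).sub measurable_const).add measurable_const)
            hbint
        have hre : ∫ x', (h x' * t - f t + C') ∂(K x) = (SK K γ x - ν) * t - f t + C' := by
          have heq : ∀ x', h x' * t - f t + C' = h x' * t + (C' - f t) := fun x' => by ring
          simp_rw [heq]
          rw [integral_add ((integrable_of_bound' hmh hbh).mul_const t) (integrable_const _),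
            integral_const, integral_mul_const, ← hSK x]
          simp
          ring
        have h1 : ENNReal.ofReal ((SK K γ x - ν) * t - f t + C') ≤ I := by
          rw [← hre]
          refine (ofReal_integral_le hint).trans (lintegral_mono fun x' => ?_)
          rw [← e_coe]
          refine eMono ?_
          calc ((h x' * t - f t + C' : ℝ) : EReal)
              = ((h x' * t - f t : ℝ) : EReal) + ((C' : ℝ) : EReal) := by norm_cast
            _ ≤ legendre f (h x') + ((C' : ℝ) : EReal) :=
                add_le_add_left (coe_le_legendre f ht (h x')) _
        rcases le_total ((SK K γ x - ν) * t - f t + C') 0 with hr | hr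
        · exact hr.trans ENNReal.toReal_nonneg
        · have h2 := ENNReal.toReal_mono hI h1
          rwa [ENNReal.toReal_ofReal hr] at h2
      have hleg : legendre f (SK K γ x - ν) ≤ ((J - C' : ℝ) : EReal) := by
        refine iSup₂_le fun t ht => ?_
        exact_mod_cast (by linarith [hstep t ht] : (SK K γ x - ν) * t - f t ≤ J - C')
      calc legendre f (SK K γ x - ν) + ((C' : ℝ) : EReal)
          ≤ ((J - C' : ℝ) : EReal) + ((C' : ℝ) : EReal) := add_le_add_left hleg _
        _ = ((J : ℝ) : EReal) := by norm_cast; ring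
  calc ∫⁻ x, Φ (SK K γ x - ν) ∂P
      ≤ ∫⁻ x, ∫⁻ x', Φ (h x') ∂(K x) ∂P := lintegral_mono hjensen
    _ = ∫⁻ x, Φ (h x) ∂P := hB.symm

/-- Theorem 3.3: if `K` is a probability kernel from `X` to itself,
`S_K[Γ] ⊆ Γ`, and `Q, P` are `K`-invariant probability measures, then
`D_f^Γ(Q‖P) = D_f^{S_K[Γ]}(Q‖P)` and `W^Γ(Q,P) = W^{S_K[Γ]}(Q,P)`. -/
theorem kernel_invariant_discriminator
    {X : Type*} [MeasurableSpace X]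
    (K : ProbabilityTheory.Kernel X X) [ProbabilityTheory.IsMarkovKernel K]
    -- `f : [0,∞) → ℝ` convex, lower semicontinuous, `f(1) = 0`, strictly convex at `1`
    (f : ℝ → ℝ)
    (hfconv : ConvexOn ℝ (Set.Ici (0 : ℝ)) f)
    (hflsc : LowerSemicontinuousOn f (Set.Ici (0 : ℝ)))
    (hf1 : f 1 = 0)
    (hfstrict : ∀ x ∈ Set.Ici (0 : ℝ), ∀ y ∈ Set.Ici (0 : ℝ), ∀ t : ℝ,
      0 < t → t < 1 → x ≠ y → t * x + (1 - t) * y = 1 →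
      f 1 < t * f x + (1 - t) * f y)
    (Γ : Set (X → ℝ)) (hΓb : Γ ⊆ Mb X)
    (hSΓ : SK K '' Γ ⊆ Γ)
    (Q P : Measure X) [IsProbabilityMeasure Q] [IsProbabilityMeasure P]
    (hQinv : Q.bind (fun x => K x) = Q)
    (hPinv : P.bind (fun x => K x) = P) :
    DfGamma f Γ Q P = DfGamma f (SK K '' Γ) Q P ∧
    IPM Γ Q P = IPM (SK K '' Γ) Q P := by
  constructor
  · apply le_antisymm
    · refine iSup₂_le fun γ hγ => ?_
      obtain ⟨hγm, C, hC⟩ := hΓb hγ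
      have hmem : SK K γ ∈ SK K '' Γ := ⟨γ, hγ, rfl⟩
      have hSm : Measurable (SK K γ) := (hΓb (hSΓ hmem)).1
      refine le_trans ?_ (le_iSup₂ (f := fun γ' (_ : γ' ∈ SK K '' Γ) =>
        (((∫ x, γ' x ∂Q : ℝ) : EReal) - LambdaF f P γ')) (SK K γ) hmem)
      refine EReal.sub_le_sub (le_of_eq ?_) (lambda_SK_le K f hf1 hPinv hγm hC hSm)
      exact_mod_cast (integral_SK_inv K hQinv hγm hC hSm).symm
    · exact iSup₂_le fun γ' hγ' => le_iSup₂_of_le γ' (hSΓ hγ') le_rfl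
  · apply le_antisymm
    · refine iSup₂_le fun γ hγ => ?_
      obtain ⟨hγm, C, hC⟩ := hΓb hγ
      have hmem : SK K γ ∈ SK K '' Γ := ⟨γ, hγ, rfl⟩
      have hSm : Measurable (SK K γ) := (hΓb (hSΓ hmem)).1
      refine le_trans ?_ (le_iSup₂ (f := fun γ' (_ : γ' ∈ SK K '' Γ) =>
        (((∫ x, γ' x ∂Q) - (∫ x, γ' x ∂P) : ℝ) : EReal)) (SK K γ) hmem)
      rw [integral_SK_inv K hQinv hγm hC hSm, integral_SK_inv K hPinv hγm hC hSm]
    · exact iSup₂_le fun γ' hγ' => le_iSup₂_of_le γ' (hSΓ hγ') le_rfl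
end

section
/- Let Σ be a compact Hausdorff topological group with Haar probability measure μ_Σ acting measurably on a measurable space X, and let Γ ⊂ M_b(X) satisfy S_Σ[Γ] ⊂ Γ. Then for arbitrary (not necessarily Σ-invariant) probability measures Q and P on X, the Γ-integral probability metric satisfies W^{Γ_Σ^{inv}}(Q,P) = W^Γ(S^Σ[Q], S^Σ[P]). -/
open MeasureTheory

/-- The dual symmetrization operator `S^Σ` on measures, `S^Σ[P] = (μ × P) ∘ T^{-1}`;
it satisfies `∫ γ d(S^Σ[P]) = ∫ S_Σ[γ] dP` for all bounded measurable `γ`. -/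
noncomputable def SdualSigma {X G : Type*} [MeasurableSpace X] [MeasurableSpace G]
    (μ : Measure G) (T : G → X → X) (P : Measure X) : Measure X :=
  Measure.map (fun p : G × X => T p.1 p.2) (μ.prod P)

section Aux

variable {X G : Type*} [MeasurableSpace X] [MeasurableSpace G]

lemma aux_integrable {α : Type*} [MeasurableSpace α] (ν : Measure α) [IsFiniteMeasure ν]
    {f : α → ℝ} (hf : Measurable f) {C : ℝ} (hC : ∀ x, |f x| ≤ C) : Integrable f ν :=
  ⟨hf.aestronglyMeasurable,
    HasFiniteIntegral.of_bounded (C := C) (Filter.Eventually.of_forall hC)⟩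

lemma aux_integral_Sdual (μ : Measure G) [IsProbabilityMeasure μ]
    (T : G → X → X) (hT : Measurable fun p : G × X => T p.1 p.2)
    (P : Measure X) [IsProbabilityMeasure P]
    {γ : X → ℝ} (hγm : Measurable γ) {C : ℝ} (hγb : ∀ x, |γ x| ≤ C) :
    ∫ x, γ x ∂(SdualSigma μ T P) = ∫ x, SSigma μ T γ x ∂P := by
  have hint : Integrable (fun p : G × X => γ (T p.1 p.2)) (μ.prod P) :=
    aux_integrable _ (hγm.comp hT) (fun p => hγb _)
  rw [SdualSigma, integral_map hT.aemeasurable hγm.aestronglyMeasurable]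
  rw [integral_prod _ hint]
  exact integral_integral_swap (f := fun σ x => γ (T σ x)) hint

lemma aux_inv [Group G] [MeasurableMul G] (μ : Measure G) [IsProbabilityMeasure μ]
    (hμr : ∀ σ : G, Measure.map (fun τ => τ * σ) μ = μ)
    (T : G → X → X) (hT : Measurable fun p : G × X => T p.1 p.2)
    (hTmul : ∀ σ₁ σ₂ : G, T σ₁ ∘ T σ₂ = T (σ₁ * σ₂))
    {γ : X → ℝ} (hγm : Measurable γ) (σ : G) :
    SSigma μ T γ ∘ T σ = SSigma μ T γ := by
  funext x
  have hmx : ∀ y : X, Measurable (fun s : G => γ (T s y)) := fun y =>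
    (hγm.comp hT).comp (measurable_id.prodMk measurable_const)
  show ∫ s, γ (T s (T σ x)) ∂μ = ∫ s, γ (T s x) ∂μ
  have h1 : ∀ s : G, γ (T s (T σ x)) = γ (T (s * σ) x) := fun s => by
    rw [← hTmul s σ]; rfl
  simp only [h1]
  calc ∫ s, γ (T (s * σ) x) ∂μ
      = ∫ s, γ (T s x) ∂(Measure.map (fun τ => τ * σ) μ) := by
        rw [integral_map (measurable_mul_const σ).aemeasurable]
        rw [hμr σ]; exact (hmx x).aestronglyMeasurable
    _ = ∫ s, γ (T s x) ∂μ := by rw [hμr σ]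

lemma aux_S_fixed (μ : Measure G) [IsProbabilityMeasure μ]
    (T : G → X → X) {γ : X → ℝ} (hinv : ∀ σ : G, γ ∘ T σ = γ) :
    SSigma μ T γ = γ := by
  funext x
  have : ∀ σ : G, γ (T σ x) = γ x := fun σ => congrFun (hinv σ) x
  simp [SSigma, this]

end Aux

/-- Theorem 3.4 for `Γ`-IPMs: if `S_Σ[Γ] ⊆ Γ`, then for arbitrary
(not necessarily `Σ`-invariant) probability measures `Q, P`,
`W^{Γ_Σ^{inv}}(Q,P) = W^Γ(S^Σ[Q], S^Σ[P])`. -/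
theorem IPM_symmetrized_measures
    {X : Type*} [MeasurableSpace X]
    {G : Type*} [Group G] [TopologicalSpace G] [IsTopologicalGroup G]
    [CompactSpace G] [T2Space G] [MeasurableSpace G] [BorelSpace G]
    (μ : Measure G) [IsProbabilityMeasure μ]
    (hμl : ∀ σ : G, Measure.map (fun τ => σ * τ) μ = μ)
    (hμr : ∀ σ : G, Measure.map (fun τ => τ * σ) μ = μ)
    (T : G → X → X)
    (hT : Measurable fun p : G × X => T p.1 p.2)
    (hT1 : T 1 = id)
    (hTmul : ∀ σ₁ σ₂ : G, T σ₁ ∘ T σ₂ = T (σ₁ * σ₂))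
    (Γ : Set (X → ℝ)) (hΓb : Γ ⊆ Mb X)
    (hSΓ : SSigma μ T '' Γ ⊆ Γ)
    (Q P : Measure X) [IsProbabilityMeasure Q] [IsProbabilityMeasure P] :
    IPM {γ ∈ Γ | ∀ σ : G, γ ∘ T σ = γ} Q P
      = IPM Γ (SdualSigma μ T Q) (SdualSigma μ T P) := by
  apply le_antisymm
  · refine iSup₂_le fun γ hγ => ?_
    obtain ⟨hγΓ, hinv⟩ := hγ
    obtain ⟨hγm, C, hγb⟩ := hΓb hγΓ
    have hQ : ∫ x, γ x ∂(SdualSigma μ T Q) = ∫ x, γ x ∂Q := by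
      rw [aux_integral_Sdual μ T hT Q hγm hγb, aux_S_fixed μ T hinv]
    have hP : ∫ x, γ x ∂(SdualSigma μ T P) = ∫ x, γ x ∂P := by
      rw [aux_integral_Sdual μ T hT P hγm hγb, aux_S_fixed μ T hinv]
    have := le_iSup₂ (f := fun γ (_ : γ ∈ Γ) =>
      (((∫ x, γ x ∂(SdualSigma μ T Q)) - (∫ x, γ x ∂(SdualSigma μ T P)) : ℝ) : EReal))
      γ hγΓ
    rw [hQ, hP] at this
    exact this
  · refine iSup₂_le fun γ hγΓ => ?_
    obtain ⟨hγm, C, hγb⟩ := hΓb hγΓ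
    have hmem : SSigma μ T γ ∈ {γ ∈ Γ | ∀ σ : G, γ ∘ T σ = γ} :=
      ⟨hSΓ ⟨γ, hγΓ, rfl⟩, fun σ => aux_inv μ hμr T hT hTmul hγm σ⟩
    have hQ : ∫ x, γ x ∂(SdualSigma μ T Q) = ∫ x, SSigma μ T γ x ∂Q :=
      aux_integral_Sdual μ T hT Q hγm hγb
    have hP : ∫ x, γ x ∂(SdualSigma μ T P) = ∫ x, SSigma μ T γ x ∂P :=
      aux_integral_Sdual μ T hT P hγm hγb
    have := le_iSup₂ (f := fun γ (_ : γ ∈ {γ ∈ Γ | ∀ σ : G, γ ∘ T σ = γ}) =>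
      (((∫ x, γ x ∂Q) - (∫ x, γ x ∂P) : ℝ) : EReal)) (SSigma μ T γ) hmem
    rw [hQ, hP]
    exact this
end

section
/- Let Σ be a compact Hausdorff topological group with Haar probability measure μ_Σ acting measurably on a measurable space X. Let V ⊂ M_b(X) be a separable reproducing kernel Hilbert space with reproducing kernel k : X × X → ℝ, and let Γ = {γ ∈ V : ‖γ‖_V ≤ 1} be the unit ball of V. If k is Σ-invariant, i.e. k(T_σ(x), T_σ(y)) = k(x,y) for all σ ∈ Σ and x,y ∈ X, then S_Σ[Γ] ⊂ Γ; in particular, for every γ ∈ V with ‖γ‖_V ≤ 1 the symmetrized function S_Σ[γ] belongs to V with ‖S_Σ[γ]‖_V ≤ 1. -/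
open MeasureTheory

/-- Lemma 3.7: let `V ⊆ M_b(X)` be a separable RKHS on `X`, realized
by an injective linear map `ι : V → (X → ℝ)` and a feature map `Φ : X → V` with
reproducing property `ι γ (x) = ⟨γ, Φ x⟩` (so `k(x,y) = ⟨Φ x, Φ y⟩ = ι (Φ y) x`, i.e.
`k(·,x)` corresponds to `Φ x`). If the kernel is `Σ`-invariant,
`k(T_σ x, T_σ y) = k(x,y)`, then the symmetrization of any member of the unit ball `Γ`
of `V` again belongs to the unit ball: `S_Σ[Γ] ⊆ Γ`. -/
theorem rkhs_unit_ball_closed_under_symmetrization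
    {X : Type*} [MeasurableSpace X]
    {G : Type*} [Group G] [TopologicalSpace G] [IsTopologicalGroup G]
    [CompactSpace G] [T2Space G] [MeasurableSpace G] [BorelSpace G]
    (μ : Measure G) [IsProbabilityMeasure μ]
    (hμl : ∀ σ : G, Measure.map (fun τ => σ * τ) μ = μ)
    (hμr : ∀ σ : G, Measure.map (fun τ => τ * σ) μ = μ)
    (T : G → X → X)
    (hT : Measurable fun p : G × X => T p.1 p.2)
    (hT1 : T 1 = id)
    (hTmul : ∀ σ₁ σ₂ : G, T σ₁ ∘ T σ₂ = T (σ₁ * σ₂))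
    -- `V` a separable real Hilbert space of functions on `X`
    (V : Type*) [NormedAddCommGroup V] [InnerProductSpace ℝ V] [CompleteSpace V]
    [TopologicalSpace.SeparableSpace V]
    (ι : V →ₗ[ℝ] (X → ℝ)) (hι : Function.Injective ι)
    (hmem : ∀ γ : V, ι γ ∈ Mb X)
    -- the feature map / reproducing kernel: `k(·,x) = ι (Φ x)`, `γ(x) = ⟨γ, k(·,x)⟩`
    (Φ : X → V)
    (hrep : ∀ (γ : V) (x : X), ι γ x = (inner ℝ γ (Φ x) : ℝ))
    -- `Σ`-invariance of the kernel `k(x,y) = ⟨Φ x, Φ y⟩`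
    (hkinv : ∀ (σ : G) (x y : X),
      (inner ℝ (Φ (T σ x)) (Φ (T σ y)) : ℝ) = (inner ℝ (Φ x) (Φ y) : ℝ)) :
    ∀ γ : V, ‖γ‖ ≤ 1 → ∃ γ' : V, ‖γ'‖ ≤ 1 ∧ ι γ' = SSigma μ T (ι γ) := by
  intro γ hγ
  classical
  set g : X → ℝ := SSigma μ T (ι γ) with hg
  -- integrability of σ ↦ ι γ (T σ x)
  have hint : ∀ x : X, Integrable (fun σ => ι γ (T σ x)) μ := by
    intro x
    obtain ⟨C, hC⟩ := (hmem γ).2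
    have hmeas : Measurable fun σ : G => ι γ (T σ x) :=
      (hmem γ).1.comp (hT.comp (measurable_id.prodMk measurable_const))
    exact (integrable_const C).mono' hmeas.aestronglyMeasurable
      (Filter.Eventually.of_forall fun σ => by simpa using hC (T σ x))
  set l : (X →₀ ℝ) →ₗ[ℝ] V := Finsupp.linearCombination ℝ Φ with hl
  set L : (X →₀ ℝ) →ₗ[ℝ] ℝ := Finsupp.linearCombination ℝ g with hL
  -- the kernel invariance gives equality of norms
  have keynorm : ∀ (σ : G) (c : X →₀ ℝ),
      ‖Finsupp.linearCombination ℝ (fun x => Φ (T σ x)) c‖ = ‖l c‖ := by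
    intro σ c
    have hin : (inner ℝ (Finsupp.linearCombination ℝ (fun x => Φ (T σ x)) c)
        (Finsupp.linearCombination ℝ (fun x => Φ (T σ x)) c) : ℝ)
        = inner ℝ (l c) (l c) := by
      rw [hl, Finsupp.linearCombination_apply, Finsupp.linearCombination_apply,
        Finsupp.sum, Finsupp.sum, sum_inner, sum_inner]
      refine Finset.sum_congr rfl fun x _ => ?_
      rw [inner_sum, inner_sum]
      refine Finset.sum_congr rfl fun y _ => ?_
      rw [real_inner_smul_left, real_inner_smul_left,
        real_inner_smul_right, real_inner_smul_right, hkinv]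
    have h1 : ‖Finsupp.linearCombination ℝ (fun x => Φ (T σ x)) c‖ ^ 2 = ‖l c‖ ^ 2 := by
      rw [← real_inner_self_eq_norm_sq, ← real_inner_self_eq_norm_sq, hin]
    nlinarith [norm_nonneg (Finsupp.linearCombination ℝ (fun x => Φ (T σ x)) c),
      norm_nonneg (l c)]
  -- L as an integral
  have keyint : ∀ c : X →₀ ℝ,
      L c = ∫ σ, (inner ℝ γ (Finsupp.linearCombination ℝ (fun x => Φ (T σ x)) c) : ℝ) ∂μ := by
    intro c
    have hrw : ∀ σ : G,
        (inner ℝ γ (Finsupp.linearCombination ℝ (fun x => Φ (T σ x)) c) : ℝ)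
        = ∑ x ∈ c.support, c x * ι γ (T σ x) := by
      intro σ
      rw [Finsupp.linearCombination_apply, Finsupp.sum, inner_sum]
      exact Finset.sum_congr rfl fun x _ => by rw [real_inner_smul_right, hrep]
    simp_rw [hrw]
    rw [integral_finset_sum _ (fun x _ => (hint x).const_mul _)]
    rw [hL, Finsupp.linearCombination_apply, Finsupp.sum]
    refine Finset.sum_congr rfl fun x _ => ?_
    rw [integral_const_mul]
    rfl
  -- boundedness of L
  have keybound : ∀ c : X →₀ ℝ, |L c| ≤ ‖l c‖ := by
    intro c
    rw [keyint c]
    have hb : ∀ᵐ σ ∂μ, ‖(inner ℝ γ (Finsupp.linearCombination ℝ (fun x => Φ (T σ x)) c) : ℝ)‖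
        ≤ ‖l c‖ := by
      refine Filter.Eventually.of_forall fun σ => ?_
      calc ‖(inner ℝ γ (Finsupp.linearCombination ℝ (fun x => Φ (T σ x)) c) : ℝ)‖
          ≤ ‖γ‖ * ‖Finsupp.linearCombination ℝ (fun x => Φ (T σ x)) c‖ := norm_inner_le_norm _ _
        _ = ‖γ‖ * ‖l c‖ := by rw [keynorm]
        _ ≤ 1 * ‖l c‖ := by
            exact mul_le_mul_of_nonneg_right hγ (norm_nonneg _)
        _ = ‖l c‖ := one_mul _
    have := norm_integral_le_of_norm_le_const (μ := μ) hb
    simpa using this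
  -- descend L to a functional on the range of l
  have hker : LinearMap.ker l ≤ LinearMap.ker L := by
    intro c hc
    have h0 : l c = 0 := LinearMap.mem_ker.mp hc
    have := keybound c
    rw [h0, norm_zero] at this
    exact LinearMap.mem_ker.mpr (abs_nonpos_iff.mp this)
  set e := LinearMap.quotKerEquivRange l with he
  set f : ↥(LinearMap.range l) →ₗ[ℝ] ℝ :=
    (Submodule.liftQ _ L hker) ∘ₗ (e.symm : ↥(LinearMap.range l) →ₗ[ℝ] _) with hf
  have hfval : ∀ c : X →₀ ℝ, f ⟨l c, LinearMap.mem_range_self l c⟩ = L c := by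
    intro c
    have hee : e (Submodule.Quotient.mk c) = ⟨l c, LinearMap.mem_range_self l c⟩ :=
      Subtype.ext (LinearMap.quotKerEquivRange_apply_mk l c)
    rw [hf]
    simp only [LinearMap.coe_comp, LinearEquiv.coe_coe, Function.comp_apply]
    rw [← hee, LinearEquiv.symm_apply_apply, Submodule.liftQ_apply]
  have hfbound : ∀ w : ↥(LinearMap.range l), ‖f w‖ ≤ 1 * ‖w‖ := by
    rintro ⟨w, hw⟩
    obtain ⟨c, rfl⟩ := hw
    rw [hfval c, one_mul]
    simpa using keybound c
  set fC : ↥(LinearMap.range l) →L[ℝ] ℝ := LinearMap.mkContinuous f 1 hfbound with hfC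
  obtain ⟨F, hF, hFnorm⟩ := exists_extension_norm_eq (LinearMap.range l) fC
  refine ⟨(InnerProductSpace.toDual ℝ V).symm F, ?_, ?_⟩
  · rw [LinearIsometryEquiv.norm_map, hFnorm]
    exact LinearMap.mkContinuous_norm_le f zero_le_one hfbound
  · funext x
    have hx : Φ x ∈ LinearMap.range l := by
      refine ⟨Finsupp.single x 1, ?_⟩
      rw [hl, Finsupp.linearCombination_single, one_smul]
    have hsub : (⟨Φ x, hx⟩ : ↥(LinearMap.range l))
        = ⟨l (Finsupp.single x 1), LinearMap.mem_range_self l _⟩ := by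
      refine Subtype.ext ?_
      show Φ x = Finsupp.linearCombination ℝ Φ (Finsupp.single x 1)
      rw [Finsupp.linearCombination_single, one_smul]
    have hLx : L (Finsupp.single x 1) = g x := by
      rw [hL, Finsupp.linearCombination_single, smul_eq_mul, one_mul]
    calc ι ((InnerProductSpace.toDual ℝ V).symm F) x
        = inner ℝ ((InnerProductSpace.toDual ℝ V).symm F) (Φ x) := hrep _ x
      _ = F (Φ x) := InnerProductSpace.toDual_symm_apply
      _ = fC ⟨Φ x, hx⟩ := hF ⟨Φ x, hx⟩
      _ = f ⟨Φ x, hx⟩ := rfl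
      _ = L (Finsupp.single x 1) := by rw [hsub, hfval]
      _ = g x := hLx
end
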